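/- arXiv:1312.5072 — 8 statements merged into one kernel-verified Lean document; each statement's English description precedes it below -/
import Mathlib

section
/- An n-partite full-correlation box P_f is local if and only if the associated Boolean function f is affine, i.e., f can be written as the XOR of a constant and a subset of the individual input bits: f(x_1,...,x_n) = c ⊕ ⊕_{i∈S} x_i for some c ∈ {0,1} and S ⊆ {1,...,n}. -/
open Finset

noncomputable section

/-- An `n`-partite box: conditional distribution `P x a` of outputs `a` given inputs `x`,
with binary inputs/outputs modeled as `ZMod 2`. -/
abbrev Box (n : ℕ) := (Fin n → ZMod 2) → (Fin n → ZMod 2) → ℝ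

/-- Non-signaling: for every subset `S` of parties, the marginal of the outputs in `S`
depends only on the inputs in `S`. -/
def IsNonSignaling {n : ℕ} (P : Box n) : Prop :=
  ∀ (S : Finset (Fin n)) (x x' : Fin n → ZMod 2), (∀ i ∈ S, x i = x' i) →
    ∀ aS : Fin n → ZMod 2,
      ∑ a ∈ Finset.univ.filter (fun a : Fin n → ZMod 2 => ∀ i ∈ S, a i = aS i), P x a =
      ∑ a ∈ Finset.univ.filter (fun a : Fin n → ZMod 2 => ∀ i ∈ S, a i = aS i), P x' a

/-- A non-signaling box: nonnegative, normalized, non-signaling. -/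
def IsNSBox {n : ℕ} (P : Box n) : Prop :=
  (∀ x a, 0 ≤ P x a) ∧ (∀ x, ∑ a, P x a = 1) ∧ IsNonSignaling P

/-- The full-correlation box associated to the Boolean function `f`. -/
def FCB (n : ℕ) (f : (Fin n → ZMod 2) → ZMod 2) : Box n :=
  fun x a => if (∑ i, a i) = f x then ((2:ℝ)^(n-1))⁻¹ else 0

/-- The `n`-partite Popescu–Rohrlich box. -/
def nPR (n : ℕ) : Box n := FCB n (fun x => ∏ i, x i)

/-- The local box with uniformly correlated outputs of even parity. -/
def Pc (n : ℕ) : Box n := FCB n (fun _ => 0)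

/-- Extremality in the non-signaling polytope. -/
def IsExtremalNS {n : ℕ} (P : Box n) : Prop :=
  IsNSBox P ∧ ∀ (ε : ℝ) (P1 P2 : Box n), 0 < ε → ε < 1 → IsNSBox P1 → IsNSBox P2 →
    (∀ x a, P x a = ε * P1 x a + (1 - ε) * P2 x a) → P1 = P ∧ P2 = P

/-- Locality: convex combination of products of single-party conditional distributions. -/
def IsLocal {n : ℕ} (P : Box n) : Prop :=
  ∃ (m : ℕ) (q : Fin m → ℝ) (s : Fin m → Fin n → ZMod 2 → ZMod 2 → ℝ),
    (∀ r, 0 ≤ q r) ∧ (∑ r, q r = 1) ∧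
    (∀ r i xi ai, 0 ≤ s r i xi ai) ∧ (∀ r i xi, ∑ ai : ZMod 2, s r i xi ai = 1) ∧
    ∀ x a, P x a = ∑ r, q r * ∏ i, s r i (x i) (a i)

/-- `f` is affine: a constant XORed with a subset of the input bits. -/
def IsAffine {n : ℕ} (f : (Fin n → ZMod 2) → ZMod 2) : Prop :=
  ∃ (c : ZMod 2) (S : Finset (Fin n)), ∀ x, f x = c + ∑ i ∈ S, x i

/-- L¹ distance between boxes. -/
def L1dist {n : ℕ} (P Q : Box n) : ℝ := ∑ x, ∑ a, |P x a - Q x a|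

private def sgn (a : ZMod 2) : ℝ := if a = 0 then 1 else -1

private lemma zmod2_cases (a : ZMod 2) : a = 0 ∨ a = 1 := by revert a; decide

private lemma sgn_add (a b : ZMod 2) : sgn (a + b) = sgn a * sgn b := by
  rcases zmod2_cases a with h | h <;> rcases zmod2_cases b with h' | h' <;>
    subst h <;> subst h' <;>
    simp [sgn, show (1:ZMod 2) + 1 = 0 from by decide, show (1:ZMod 2) ≠ 0 from by decide]

private lemma sgn_sum {ι : Type*} (s : Finset ι) (g : ι → ZMod 2) :
    sgn (∑ i ∈ s, g i) = ∏ i ∈ s, sgn (g i) := by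
  induction s using Finset.cons_induction with
  | empty => simp [sgn]
  | cons a s ha ih => rw [Finset.sum_cons, Finset.prod_cons, sgn_add, ih]

private lemma sgn_inj {a b : ZMod 2} (h : sgn a = sgn b) : a = b := by
  rcases zmod2_cases a with ha | ha <;> rcases zmod2_cases b with hb | hb <;>
    subst ha <;> subst hb <;> first | rfl |
    (simp [sgn, show (1:ZMod 2) ≠ 0 from by decide] at h; norm_num at h)

private lemma sgn_mul_self (a : ZMod 2) : sgn a * sgn a = 1 := by
  rcases zmod2_cases a with h | h <;> subst h <;>
    norm_num [sgn, show (1:ZMod 2) ≠ 0 from by decide]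

private lemma abs_sgn (a : ZMod 2) : |sgn a| = 1 := by
  rcases zmod2_cases a with h | h <;> subst h <;>
    norm_num [sgn, show (1:ZMod 2) ≠ 0 from by decide]

private lemma zmod_sum_two (g : ZMod 2 → ℝ) : ∑ b, g b = g 0 + g 1 := by
  rw [show (Finset.univ : Finset (ZMod 2)) = {0,1} from by decide]
  simp [Finset.sum_pair, show (0:ZMod 2) ≠ 1 from by decide]

private lemma update_sum {n : ℕ} (i0 : Fin n) (a : Fin n → ZMod 2) :
    ∑ i, Function.update a i0 (a i0 + 1) i = (∑ i, a i) + 1 := by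
  rw [Finset.sum_update_of_mem (Finset.mem_univ i0),
    Finset.sum_eq_sum_sdiff_singleton_add (Finset.mem_univ i0) a]
  ring

private lemma card_parity (n : ℕ) (hn : 1 ≤ n) (v : ZMod 2) :
    (Finset.univ.filter (fun a : Fin n → ZMod 2 => ∑ i, a i = v)).card = 2 ^ (n - 1) := by
  have i0 : Fin n := ⟨0, hn⟩
  have hinv : ∀ a : Fin n → ZMod 2,
      Function.update (Function.update a i0 (a i0 + 1)) i0
        (Function.update a i0 (a i0 + 1) i0 + 1) = a := by
    intro a; funext j
    by_cases h : j = i0 <;>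
      simp [Function.update, h, show ∀ c : ZMod 2, c + 1 + 1 = c from by decide]
  have key : ∀ w : ZMod 2,
      (Finset.univ.filter (fun a : Fin n → ZMod 2 => ∑ i, a i = w)).card =
      (Finset.univ.filter (fun a : Fin n → ZMod 2 => ∑ i, a i = w + 1)).card := by
    intro w
    refine Finset.card_bij' (fun a _ => Function.update a i0 (a i0 + 1))
      (fun a _ => Function.update a i0 (a i0 + 1)) ?_ ?_ ?_ ?_
    · intro a ha
      simp only [Finset.mem_filter, Finset.mem_univ, true_and] at ha ⊢
      rw [update_sum, ha]
    · intro a ha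
      simp only [Finset.mem_filter, Finset.mem_univ, true_and] at ha ⊢
      rw [update_sum, ha]
      exact (by decide : ∀ u : ZMod 2, u + 1 + 1 = u) w
    · intro a _; exact hinv a
    · intro a _; exact hinv a
  have h2 : 2 ^ n = 2 * 2 ^ (n - 1) := by
    rw [← pow_succ']; congr 1; omega
  have hsplit := Finset.card_filter_add_card_filter_not
    (s := (Finset.univ : Finset (Fin n → ZMod 2)))
    (p := fun a => ∑ i, a i = (0 : ZMod 2))
  have hne : (Finset.univ.filter (fun a : Fin n → ZMod 2 => ¬ ∑ i, a i = 0)) =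
      (Finset.univ.filter (fun a : Fin n → ZMod 2 => ∑ i, a i = (0:ZMod 2) + 1)) := by
    apply Finset.filter_congr
    intro a _
    rcases zmod2_cases (∑ i, a i) with h | h <;> rw [h] <;> simp
  rw [hne, ← key 0] at hsplit
  have hcard : Fintype.card (Fin n → ZMod 2) = 2 ^ n := by simp
  rw [Finset.card_univ, hcard] at hsplit
  have h0 : (Finset.univ.filter (fun a : Fin n → ZMod 2 => ∑ i, a i = (0:ZMod 2))).card
      = 2 ^ (n - 1) :=
    Nat.eq_of_mul_eq_mul_left (show 0 < 2 from by norm_num) (by rw [two_mul, hsplit, h2])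
  rcases zmod2_cases v with h | h <;> subst h
  · exact h0
  · have := (key 0).symm.trans h0
    simpa using this

set_option maxHeartbeats 1000000 in
/-- a full-correlation box is local iff its Boolean function is affine. -/
theorem fcb_local_iff_affine (n : ℕ) (hn : 1 ≤ n)
    (f : (Fin n → ZMod 2) → ZMod 2) : IsLocal (FCB n f) ↔ IsAffine f := by
  rw [IsLocal, IsAffine]
  classical
  have hC0 : ((2:ℝ)^(n-1)) ≠ 0 := by positivity
  constructor
  · rintro ⟨m, q, s, hq0, hq1, hs0, hs1, hP⟩
    set E : Fin m → Fin n → ZMod 2 → ℝ := fun r i b => s r i b 0 - s r i b 1 with hE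
    have habs : ∀ r i b, |E r i b| ≤ 1 := by
      intro r i b
      have h1 := hs1 r i b
      rw [zmod_sum_two] at h1
      have h2 := hs0 r i b 0
      have h3 := hs0 r i b 1
      rw [abs_le]; constructor <;> simp only [hE] <;> nlinarith
    -- correlator of FCB
    have hA : ∀ x, (∑ a, sgn (∑ i, a i) * FCB n f x a) = sgn (f x) := by
      intro x
      have hc : ∀ a : Fin n → ZMod 2, sgn (∑ i, a i) * FCB n f x a =
          if (∑ i, a i) = f x then sgn (f x) * ((2:ℝ)^(n-1))⁻¹ else 0 := by
        intro a
        simp only [FCB]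
        split_ifs with h
        · rw [h]
        · ring
      rw [Finset.sum_congr rfl (fun a _ => hc a), Finset.sum_ite, Finset.sum_const,
        Finset.sum_const_zero, card_parity n hn (f x), add_zero, nsmul_eq_mul]
      push_cast
      field_simp
    have hB : ∀ x, (∑ a, sgn (∑ i, a i) * FCB n f x a) = ∑ r, q r * ∏ i, E r i (x i) := by
      intro x
      calc ∑ a : Fin n → ZMod 2, sgn (∑ i, a i) * FCB n f x a
          = ∑ a : Fin n → ZMod 2, ∑ r, q r * (sgn (∑ i, a i) * ∏ i, s r i (x i) (a i)) := by
            refine Finset.sum_congr rfl fun a _ => ?_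
            rw [hP x a, Finset.mul_sum]
            exact Finset.sum_congr rfl fun r _ => by ring
        _ = ∑ r, q r * ∑ a : Fin n → ZMod 2, sgn (∑ i, a i) * ∏ i, s r i (x i) (a i) := by
            rw [Finset.sum_comm]
            exact Finset.sum_congr rfl fun r _ => by rw [Finset.mul_sum]
        _ = ∑ r, q r * ∏ i, E r i (x i) := by
            refine Finset.sum_congr rfl fun r _ => ?_
            congr 1
            have hswap := Finset.prod_univ_sum (fun _ : Fin n => (Finset.univ : Finset (ZMod 2)))
              (fun i b => sgn b * s r i (x i) b)
            rw [Fintype.piFinset_univ] at hswap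
            calc ∑ a : Fin n → ZMod 2, sgn (∑ i : Fin n, a i) * ∏ i : Fin n, s r i (x i) (a i)
                = ∑ a : Fin n → ZMod 2, ∏ i : Fin n, (sgn (a i) * s r i (x i) (a i)) := by
                  refine Finset.sum_congr rfl fun a _ => ?_
                  rw [sgn_sum, ← Finset.prod_mul_distrib]
              _ = ∏ i, ∑ b : ZMod 2, sgn b * s r i (x i) b := hswap.symm
              _ = ∏ i, E r i (x i) := by
                  refine Finset.prod_congr rfl fun i _ => ?_
                  rw [zmod_sum_two]
                  simp [sgn, hE, show (1:ZMod 2) ≠ 0 from by decide]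
                  ring
    have habsprod : ∀ (r : Fin m) (x : Fin n → ZMod 2), |∏ i, E r i (x i)| ≤ 1 := by
      intro r x
      rw [Finset.abs_prod]
      exact Finset.prod_le_one (fun i _ => abs_nonneg _) (fun i _ => habs r i (x i))
    have hkey : ∀ (x : Fin n → ZMod 2) (r : Fin m), 0 < q r →
        ∏ i, E r i (x i) = sgn (f x) := by
      intro x r hr
      have hsum0 : ∑ r', q r' * (1 - sgn (f x) * ∏ i, E r' i (x i)) = 0 := by
        have expand : ∀ r' : Fin m, q r' * (1 - sgn (f x) * ∏ i, E r' i (x i)) =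
            q r' - sgn (f x) * (q r' * ∏ i, E r' i (x i)) := by intro r'; ring
        rw [Finset.sum_congr rfl fun r' _ => expand r', Finset.sum_sub_distrib,
          ← Finset.mul_sum, hq1, ← hB x, hA x, sgn_mul_self]
        ring
      have hnn : ∀ r' ∈ Finset.univ, 0 ≤ q r' * (1 - sgn (f x) * ∏ i, E r' i (x i)) := by
        intro r' _
        apply mul_nonneg (hq0 r')
        have : sgn (f x) * ∏ i, E r' i (x i) ≤ 1 := by
          calc sgn (f x) * ∏ i, E r' i (x i) ≤ |sgn (f x) * ∏ i, E r' i (x i)| := le_abs_self _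
            _ = |sgn (f x)| * |∏ i, E r' i (x i)| := abs_mul _ _
            _ ≤ 1 := by rw [abs_sgn, one_mul]; exact habsprod r' x
        linarith
      have hterm := (Finset.sum_eq_zero_iff_of_nonneg hnn).mp hsum0 r (Finset.mem_univ r)
      have h1 : 1 - sgn (f x) * ∏ i, E r i (x i) = 0 := by
        rcases mul_eq_zero.mp hterm with h | h
        · exact absurd h (ne_of_gt hr)
        · exact h
      have h2 : sgn (f x) * ∏ i, E r i (x i) = 1 := by linarith
      have := sgn_mul_self (f x)
      calc ∏ i, E r i (x i) = (sgn (f x) * sgn (f x)) * ∏ i, E r i (x i) := by rw [this]; ring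
        _ = sgn (f x) * (sgn (f x) * ∏ i, E r i (x i)) := by ring
        _ = sgn (f x) := by rw [h2, mul_one]
    obtain ⟨r0, hr0⟩ : ∃ r, 0 < q r := by
      by_contra hcon
      push_neg at hcon
      have : ∑ r, q r = 0 := Finset.sum_eq_zero fun r _ => le_antisymm (hcon r) (hq0 r)
      rw [hq1] at this; norm_num at this
    have habsE1 : ∀ (i : Fin n) (b : ZMod 2), |E r0 i b| = 1 := by
      intro i b
      set x : Fin n → ZMod 2 := fun j => if j = i then b else 0 with hx
      have h1 : ∏ j, E r0 j (x j) = sgn (f x) := hkey x r0 hr0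
      have h2 : (1:ℝ) = ∏ j, |E r0 j (x j)| := by
        rw [← Finset.abs_prod, h1, abs_sgn]
      have hle : ∏ j, |E r0 j (x j)| ≤ |E r0 i (x i)| := by
        rw [← Finset.mul_prod_erase _ _ (Finset.mem_univ i)]
        calc |E r0 i (x i)| * ∏ j ∈ Finset.univ.erase i, |E r0 j (x j)|
            ≤ |E r0 i (x i)| * 1 := by
              apply mul_le_mul_of_nonneg_left _ (abs_nonneg _)
              exact Finset.prod_le_one (fun j _ => abs_nonneg _) (fun j _ => habs r0 j (x j))
          _ = |E r0 i (x i)| := mul_one _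
      have hxi : x i = b := by simp [hx]
      rw [hxi] at hle
      exact le_antisymm (habs r0 i b) (by linarith)
    set h' : Fin n → ZMod 2 → ZMod 2 := fun i b => if E r0 i b = 1 then 0 else 1 with hh'
    have hEs : ∀ i b, E r0 i b = sgn (h' i b) := by
      intro i b
      by_cases hc : E r0 i b = 1
      · simp [hh', hc, sgn]
      · rcases (abs_eq (by norm_num : (0:ℝ) ≤ 1)).mp (habsE1 i b) with h1 | h1
        · exact absurd h1 hc
        · rw [h1]
          simp [hh', hc, sgn, show (1:ZMod 2) ≠ 0 from by decide]
    have hfx : ∀ x, f x = ∑ i, h' i (x i) := by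
      intro x
      apply sgn_inj
      calc sgn (f x) = ∏ i, E r0 i (x i) := (hkey x r0 hr0).symm
        _ = ∏ i, sgn (h' i (x i)) := Finset.prod_congr rfl fun i _ => hEs i (x i)
        _ = sgn (∑ i, h' i (x i)) := (sgn_sum _ _).symm
    refine ⟨∑ i, h' i 0, Finset.univ.filter (fun i => h' i 0 ≠ h' i 1), fun x => ?_⟩
    have hterm : ∀ i, h' i (x i) = h' i 0 + (if h' i 0 ≠ h' i 1 then x i else 0) := by
      intro i
      rcases zmod2_cases (x i) with hx | hx <;> rw [hx]
      · show h' i 0 = h' i 0 + (if h' i 0 ≠ h' i 1 then 0 else 0)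
        rw [ite_self, add_zero]
      · by_cases hne : h' i 0 ≠ h' i 1
        · rw [if_pos hne]
          exact (by decide : ∀ u v : ZMod 2, u ≠ v → v = u + 1) _ _ hne
        · push_neg at hne
          rw [if_neg (not_ne_iff.mpr hne), add_zero, hne]
    rw [hfx x, Finset.sum_congr rfl fun i _ => hterm i, Finset.sum_add_distrib]
    congr 1
    rw [Finset.sum_filter]
  · rintro ⟨c, S, hf⟩
    let i0 : Fin n := ⟨0, hn⟩
    let g : Fin n → ZMod 2 → ZMod 2 := fun i xi =>
      (if i ∈ S then xi else 0) + (if i = i0 then c else 0)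
    have hg : ∀ x, ∑ i, g i (x i) = f x := by
      intro x
      rw [hf x]
      simp only [g]
      rw [Finset.sum_add_distrib, Finset.sum_ite_mem, Finset.univ_inter,
        Finset.sum_ite_eq' Finset.univ i0 (fun _ => c)]
      simp [add_comm]
    have hcard : Fintype.card (Fin n → ZMod 2) = 2 ^ n := by simp
    let e : (Fin n → ZMod 2) ≃ Fin (2 ^ n) := (Fintype.equivFin _).trans (finCongr hcard)
    refine ⟨2 ^ n, fun k => if (∑ i, (e.symm k) i) = 0 then ((2:ℝ)^(n-1))⁻¹ else 0,
      fun k i xi ai => if ai = (e.symm k) i + g i xi then 1 else 0, ?_, ?_, ?_, ?_, ?_⟩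
    · intro r; dsimp only; split_ifs <;> positivity
    · rw [Equiv.sum_comp e.symm (fun r => if (∑ i, r i) = 0 then ((2:ℝ)^(n-1))⁻¹ else 0)]
      rw [Finset.sum_ite, Finset.sum_const, Finset.sum_const_zero, add_zero,
        card_parity n hn 0, nsmul_eq_mul]
      push_cast
      field_simp
    · intro r i xi ai; dsimp only; split_ifs <;> norm_num
    · intro r i xi
      rw [zmod_sum_two]
      dsimp only
      rcases zmod2_cases ((e.symm r) i + g i xi) with h | h <;>
        rw [h] <;> simp [show (0:ZMod 2) ≠ 1 from by decide, show (1:ZMod 2) ≠ 0 from by decide]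
    · intro x a
      rw [Equiv.sum_comp e.symm
        (fun r => (if (∑ i, r i) = 0 then ((2:ℝ)^(n-1))⁻¹ else 0) *
          ∏ i, if a i = r i + g i (x i) then 1 else 0)]
      have hprod : ∀ r : Fin n → ZMod 2,
          (∏ i, if a i = r i + g i (x i) then (1:ℝ) else 0) =
          if r = (fun i => a i + g i (x i)) then 1 else 0 := by
        intro r
        rw [Finset.prod_boole]
        congr 1
        simp only [eq_iff_iff]
        constructor
        · intro hall
          funext i
          have := hall i (Finset.mem_univ i)
          exact (by decide : ∀ u v w : ZMod 2, u = v + w → v = u + w) _ _ _ this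
        · intro hr i _
          rw [hr]
          exact (by decide : ∀ u w : ZMod 2, u = (u + w) + w) _ _
      rw [Finset.sum_congr rfl fun r _ => by rw [hprod r]]
      have hcollapse : ∑ r : Fin n → ZMod 2,
          (if (∑ i, r i) = 0 then ((2:ℝ)^(n-1))⁻¹ else 0) *
            (if r = (fun i => a i + g i (x i)) then 1 else 0) =
          if (∑ i, (a i + g i (x i))) = 0 then ((2:ℝ)^(n-1))⁻¹ else 0 := by
        have hterm2 : ∀ r : Fin n → ZMod 2,
            (if (∑ i, r i) = 0 then ((2:ℝ)^(n-1))⁻¹ else 0) *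
              (if r = (fun i => a i + g i (x i)) then 1 else 0) =
            if r = (fun i => a i + g i (x i)) then
              (if (∑ i, r i) = 0 then ((2:ℝ)^(n-1))⁻¹ else 0) else 0 := by
          intro r; split_ifs <;> ring
        rw [Finset.sum_congr rfl fun r _ => hterm2 r,
          Finset.sum_ite_eq' Finset.univ (fun i => a i + g i (x i))
            (fun r => if (∑ i, r i) = 0 then ((2:ℝ)^(n-1))⁻¹ else 0)]
        simp
      rw [hcollapse, Finset.sum_add_distrib, hg x]
      simp only [FCB]
      congr 1
      simp only [eq_iff_iff]
      exact (by decide : ∀ u v : ZMod 2, (u = v) ↔ (u + v = 0)) _ _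
end
end

section
/- If a Boolean function f on n inputs contains at least one monomial of degree ≥ 2 in its algebraic normal form (i.e., f is not affine), then the full-correlation box P_f is non-local. -/
open Finset

noncomputable section

open Function

/-!
Choose `i ≠ j` in a monomial of degree `≥ 2` of the algebraic normal form of `f`, take a monomial
`J₀` containing both that is minimal for inclusion, and fix the other inputs to the indicator of
`J₀`. Then only the monomial `J₀` survives in the mixed second difference of `f` in the inputs
`i` and `j`, so this difference is `1`: letting parties `i` and `j` vary gives a CHSH game.
For `P_f` the full correlator `∑ a, (-1) ^ (∑ k, a k) * P_f(a|x)` is `(-1) ^ f x`, whereas for a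
local model it is `∑ r, q r * ∏ k, m r k (x k)` with `|m r k _| ≤ 1`; by the CHSH inequality the
signed sum of the four correlators is then at most `2`, while for `P_f` it is `4`.
-/

lemma ZMod.sum_univ_two {M : Type*} [AddCommMonoid M] (g : ZMod 2 → M) :
    ∑ b, g b = g 0 + g 1 :=
  Fin.sum_univ_two g

lemma ZMod.eq_zero_or_eq_one (u : ZMod 2) : u = 0 ∨ u = 1 := by decide +revert

lemma ZMod.sum_ite_self_one (p : Prop) [Decidable p] :
    ∑ u : ZMod 2, (if p then u else 1) = if p then 1 else 0 := by
  split_ifs <;> decide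

def parityChar : AddChar (ZMod 2) ℝ where
  toFun b := (-1) ^ b.val
  map_zero_eq_one' := by simp
  map_add_eq_mul' a b := by
    rw [ZMod.val_add, ← pow_add, neg_one_pow_eq_pow_mod_two (a.val + b.val)]

namespace parityChar

lemma apply (b : ZMod 2) : parityChar b = (-1) ^ b.val := rfl

@[simp] lemma apply_one : parityChar 1 = -1 := by rw [apply, ZMod.val_one, pow_one]

@[simp] lemma mul_self (b : ZMod 2) : parityChar b * parityChar b = 1 := by
  rw [← AddChar.map_add_eq_mul, CharTwo.add_self_eq_zero, AddChar.map_zero_eq_one]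

@[simp] lemma abs_apply (b : ZMod 2) : |parityChar b| = 1 := by simp [apply]

lemma map_sum {ι : Type*} (s : Finset ι) (a : ι → ZMod 2) :
    parityChar (∑ i ∈ s, a i) = ∏ i ∈ s, parityChar (a i) := by
  induction s using Finset.cons_induction with
  | empty => simp
  | cons i s _ ih => rw [prod_cons, sum_cons, AddChar.map_add_eq_mul, ih]

end parityChar

lemma abs_add_add_abs_sub_le_two {x y : ℝ} (hx : |x| ≤ 1) (hy : |y| ≤ 1) :
    |x + y| + |x - y| ≤ 2 := by
  rw [abs_le] at hx hy
  rcases abs_cases (x + y) with ⟨h, _⟩ | ⟨h, _⟩ <;>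
    rcases abs_cases (x - y) with ⟨h', _⟩ | ⟨h', _⟩ <;> linarith

lemma abs_chsh_le {A B : ZMod 2 → ℝ} (hA : ∀ u, |A u| ≤ 1) (hB : ∀ v, |B v| ≤ 1) :
    |∑ u, ∑ v, parityChar (u * v) * (A u * B v)| ≤ 2 :=
  calc |∑ u, ∑ v, parityChar (u * v) * (A u * B v)|
      = |A 0 * (B 0 + B 1) + A 1 * (B 0 - B 1)| := by
        simp only [ZMod.sum_univ_two, mul_zero, mul_one, AddChar.map_zero_eq_one,
          parityChar.apply_one]
        ring_nf
    _ ≤ |A 0| * |B 0 + B 1| + |A 1| * |B 0 - B 1| := by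
        rw [← abs_mul, ← abs_mul]
        exact abs_add_le _ _
    _ ≤ 1 * |B 0 + B 1| + 1 * |B 0 - B 1| := by gcongr <;> exact hA _
    _ ≤ 2 := by simpa using abs_add_add_abs_sub_le_two (hB 0) (hB 1)

lemma abs_chsh_le_of_sum_eq_one {c : ZMod 2 → ZMod 2 → ZMod 2} (hc : ∑ u, ∑ v, c u v = 1)
    {A B : ZMod 2 → ℝ} (hA : ∀ u, |A u| ≤ 1) (hB : ∀ v, |B v| ≤ 1) :
    |∑ u, ∑ v, parityChar (c u v) * (A u * B v)| ≤ 2 := by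
  -- `c` is `u * v` plus an affine function of `u` and `v`, whose signs are absorbed into `A`, `B`.
  have hc_decomp : ∀ u v, c u v = (c 0 0 + (c 1 0 + c 0 0) * u) + (c 0 1 + c 0 0) * v + u * v := by
    simp only [ZMod.sum_univ_two] at hc
    intro u v
    rcases ZMod.eq_zero_or_eq_one u with rfl | rfl <;>
      rcases ZMod.eq_zero_or_eq_one v with rfl | rfl <;> grind
  calc |∑ u, ∑ v, parityChar (c u v) * (A u * B v)|
      = |∑ u, ∑ v, parityChar (u * v) * ((parityChar (c 0 0 + (c 1 0 + c 0 0) * u) * A u) *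
          (parityChar ((c 0 1 + c 0 0) * v) * B v))| := by
        congr 1
        refine sum_congr rfl fun u _ => sum_congr rfl fun v _ => ?_
        rw [hc_decomp, AddChar.map_add_eq_mul, AddChar.map_add_eq_mul]
        ring
    _ ≤ 2 := abs_chsh_le (fun u => by simpa [abs_mul] using hA u)
        (fun v => by simpa [abs_mul] using hB v)

section UpdateProducts

variable {ι β M : Type*} [DecidableEq ι] [CommMonoid M]

lemma Finset.prod_apply_update (g : ι → β → M) (z : ι → β) (i : ι) (u : β) (s : Finset ι) :
    ∏ k ∈ s, g k (update z i u k) =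
      (if i ∈ s then g i u else 1) * ∏ k ∈ s.erase i, g k (z k) := by
  simp only [apply_update (fun k => g k)]
  split_ifs with hi
  · rw [prod_update_of_mem hi, sdiff_singleton_eq_erase]
  · rw [prod_update_of_notMem hi, erase_eq_of_notMem hi, one_mul]

lemma Finset.prod_apply_update_update (g : ι → β → M) (z : ι → β) {i j : ι} (hij : i ≠ j)
    (u v : β) (s : Finset ι) :
    ∏ k ∈ s, g k (update (update z i u) j v k) =
      (if i ∈ s then g i u else 1) * (if j ∈ s then g j v else 1) *
        ∏ k ∈ (s.erase i).erase j, g k (z k) := by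
  rw [prod_apply_update, prod_apply_update, erase_right_comm]
  simp only [mem_erase, ne_eq, hij, not_false_eq_true, true_and]
  exact (mul_left_comm _ _ _).trans (mul_assoc _ _ _).symm

end UpdateProducts

section AlgebraicNormalForm

variable {ι : Type*} [DecidableEq ι]

lemma sum_sum_prod_update_update {i j : ι} (hij : i ≠ j) (z : ι → ZMod 2) (J : Finset ι) :
    ∑ u : ZMod 2, ∑ v : ZMod 2, ∏ k ∈ J, update (update z i u) j v k =
      if i ∈ J ∧ j ∈ J then ∏ k ∈ (J.erase i).erase j, z k else 0 := by
  simp only [prod_apply_update_update (fun _ b => b) z hij, ← sum_mul, ← mul_sum,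
    ZMod.sum_ite_self_one]
  split_ifs <;> simp_all

variable [Fintype ι]

theorem exists_sum_sum_update_update_eq_one {f : (ι → ZMod 2) → ZMod 2} {a : Finset ι → ZMod 2}
    (ha : ∀ x, f x = ∑ J : Finset ι, a J * ∏ k ∈ J, x k) {I : Finset ι} (haI : a I = 1)
    {i j : ι} (hij : i ≠ j) (hi : i ∈ I) (hj : j ∈ I) :
    ∃ z, ∑ u : ZMod 2, ∑ v : ZMod 2, f (update (update z i u) j v) = 1 := by
  obtain ⟨J₀, hJ₀⟩ := exists_minimal_of_wellFoundedLT
    (fun J : Finset ι => i ∈ J ∧ j ∈ J ∧ a J ≠ 0) ⟨I, hi, hj, by simp [haI]⟩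
  obtain ⟨hiJ₀, hjJ₀, haJ₀⟩ := hJ₀.prop
  have h_eq_J₀ : ∀ J, i ∈ J → j ∈ J → (J.erase i).erase j ⊆ J₀ → a J ≠ 0 → J = J₀ := by
    intro J hiJ hjJ hJ haJ
    refine hJ₀.eq_of_le ⟨hiJ, hjJ, haJ⟩ fun k hk => ?_
    by_cases hki : k = i
    · exact hki ▸ hiJ₀
    by_cases hkj : k = j
    · exact hkj ▸ hjJ₀
    exact hJ (by simp [hk, hki, hkj])
  set z : ι → ZMod 2 := fun k => if k ∈ J₀ then 1 else 0
  refine ⟨z, ?_⟩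
  calc ∑ u : ZMod 2, ∑ v : ZMod 2, f (update (update z i u) j v)
      = ∑ J, a J * ∑ u : ZMod 2, ∑ v : ZMod 2, ∏ k ∈ J, update (update z i u) j v k := by
        simp only [ha, mul_sum]
        exact (sum_congr rfl fun _ _ => sum_comm).trans sum_comm
    _ = a J₀ * 1 := by
        rw [sum_eq_single J₀]
        · simp [z, sum_sum_prod_update_update hij, hiJ₀, hjJ₀, prod_boole]
        · intro J _ hne
          rw [sum_sum_prod_update_update hij, prod_boole]
          split_ifs with hiJ hsub
          · rw [mul_one]
            by_contra haJ
            exact hne (h_eq_J₀ J hiJ.1 hiJ.2 hsub haJ)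
          all_goals exact mul_zero _
        · simp
    _ = 1 := by rw [mul_one, (ZMod.eq_zero_or_eq_one _).resolve_left haJ₀]

end AlgebraicNormalForm

section LocalModel

variable {R ι : Type*} [Fintype R] [Fintype ι] [DecidableEq ι]

lemma sum_prod_mul_sum_mul_prod (q : R → ℝ) (s : R → ι → ZMod 2 → ZMod 2 → ℝ)
    (w : ZMod 2 → ℝ) (x : ι → ZMod 2) :
    ∑ a : ι → ZMod 2, (∏ k, w (a k)) * ∑ r, q r * ∏ k, s r k (x k) (a k) =
      ∑ r, q r * ∏ k, ∑ b, w b * s r k (x k) b := by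
  simp only [Fintype.prod_sum, mul_sum, prod_mul_distrib]
  rw [sum_comm]
  exact sum_congr rfl fun _ _ => sum_congr rfl fun _ _ => mul_left_comm _ _ _

lemma abs_sub_le_one_of_sum_eq_one {p : ZMod 2 → ℝ} (hp0 : ∀ b, 0 ≤ p b)
    (hp1 : ∑ b, p b = 1) : |p 0 - p 1| ≤ 1 := by
  rw [ZMod.sum_univ_two] at hp1
  have := hp0 0
  have := hp0 1
  rw [abs_le]
  constructor <;> linarith

theorem sum_sum_parityChar_mul_le_two {q : R → ℝ} (hq0 : ∀ r, 0 ≤ q r) (hq1 : ∑ r, q r = 1)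
    {M : R → ι → ZMod 2 → ℝ} (hM : ∀ r k b, |M r k b| ≤ 1) {i j : ι} (hij : i ≠ j)
    (z : ι → ZMod 2) {c : ZMod 2 → ZMod 2 → ZMod 2} (hc : ∑ u, ∑ v, c u v = 1) :
    ∑ u, ∑ v, parityChar (c u v) * ∑ r, q r * ∏ k, M r k (update (update z i u) j v k) ≤ 2 := by
  set G : R → ℝ := fun r => ∏ k ∈ (univ.erase i).erase j, M r k (z k)
  have hG : ∀ r, |G r| ≤ 1 := fun r => by
    rw [abs_prod]
    exact prod_le_one (fun k _ => abs_nonneg _) fun k _ => hM r k (z k)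
  calc ∑ u, ∑ v, parityChar (c u v) * ∑ r, q r * ∏ k, M r k (update (update z i u) j v k)
      = ∑ r, q r * (G r * ∑ u, ∑ v, parityChar (c u v) * (M r i u * M r j v)) := by
        simp only [prod_apply_update_update _ _ hij, mem_univ, if_true, mul_sum]
        rw [(sum_congr rfl fun _ _ => sum_comm).trans sum_comm]
        exact sum_congr rfl fun r _ => sum_congr rfl fun u _ => sum_congr rfl fun v _ => by ring
    _ ≤ ∑ r, q r * 2 := by
        refine sum_le_sum fun r _ => mul_le_mul_of_nonneg_left ?_ (hq0 r)
        calc G r * _ ≤ |G r| * |∑ u, ∑ v, parityChar (c u v) * (M r i u * M r j v)| := by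
              rw [← abs_mul]
              exact le_abs_self _
          _ ≤ 1 * 2 := by
              gcongr
              · exact hG r
              · exact abs_chsh_le_of_sum_eq_one hc (hM r i) (hM r j)
          _ = 2 := one_mul 2
    _ = 2 := by rw [← sum_mul, hq1, one_mul]

end LocalModel

lemma sum_parityChar_mul_fcb {n : ℕ} (f : (Fin n → ZMod 2) → ZMod 2) (x : Fin n → ZMod 2) :
    ∑ a, parityChar (∑ i, a i) * FCB n f x a = parityChar (f x) * ∑ a, FCB n f x a := by
  rw [mul_sum]
  refine sum_congr rfl fun a _ => ?_
  unfold FCB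
  split_ifs with h
  · rw [h]
  · simp only [mul_zero]

lemma parityChar_eq_correlator_of_fcb_eq {n m : ℕ} {f : (Fin n → ZMod 2) → ZMod 2}
    {q : Fin m → ℝ} {s : Fin m → Fin n → ZMod 2 → ZMod 2 → ℝ} (hq1 : ∑ r, q r = 1)
    (hs1 : ∀ r i xi, ∑ ai : ZMod 2, s r i xi ai = 1)
    (hP : ∀ x a, FCB n f x a = ∑ r, q r * ∏ i, s r i (x i) (a i)) (x : Fin n → ZMod 2) :
    parityChar (f x) = ∑ r, q r * ∏ k, (s r k (x k) 0 - s r k (x k) 1) := by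
  have hnorm : ∑ a, FCB n f x a = 1 := by
    simpa [hP, hs1, hq1] using sum_prod_mul_sum_mul_prod q s 1 x
  calc parityChar (f x) = ∑ a, (∏ k, parityChar (a k)) * FCB n f x a := by
        simp_rw [← parityChar.map_sum, sum_parityChar_mul_fcb, hnorm, mul_one]
    _ = _ := by
        simp only [hP, sum_prod_mul_sum_mul_prod, ZMod.sum_univ_two, AddChar.map_zero_eq_one,
          parityChar.apply_one, one_mul, neg_one_mul, ← sub_eq_add_neg]

/-- if the ANF of `f` contains a monomial of degree ≥ 2, then `FCB f`
is non-local. -/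
theorem fcb_nonlocal_of_degree_two_monomial (n : ℕ)
    (f : (Fin n → ZMod 2) → ZMod 2) (a : Finset (Fin n) → ZMod 2)
    (ha : ∀ x, f x = ∑ I : Finset (Fin n), a I * ∏ i ∈ I, x i)
    (I : Finset (Fin n)) (hI : 2 ≤ I.card) (haI : a I = 1) :
    ¬ IsLocal (FCB n f) := by
  rintro ⟨m, q, s, hq0, hq1, hs0, hs1, hP⟩
  obtain ⟨i, hi, j, hj, hij⟩ := one_lt_card.mp hI
  obtain ⟨z, hz⟩ := exists_sum_sum_update_update_eq_one ha haI hij hi hj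
  have hle := sum_sum_parityChar_mul_le_two hq0 hq1
    (fun r k b => abs_sub_le_one_of_sum_eq_one (hs0 r k b) (hs1 r k b)) hij z hz
  simp only [← parityChar_eq_correlator_of_fcb_eq hq1 hs1 hP, parityChar.mul_self] at hle
  norm_num at hle
end
end

section
/- Let P_f be a non-local n-partite full-correlation box. Then the minimum L^1 distance from P_f to a local box equals the minimum L^1 distance from P_f to a local full-correlation box; i.e., among the local boxes closest to P_f (in L^1 norm over all inputs and outputs), there is one that is itself a full-correlation box. -/
open Finset

noncomputable section

/-!
Decomposing every single-party strategy into deterministic ones writes a local box `Q` as a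
mixture of deterministic product boxes `a = (D i (x i))ᵢ`. Since `FCB n f` puts all its weight
on outputs of parity `f x`, such a box is at L¹ distance at least `2` from it on every input with
`f x ≠ ∑ i, D i (x i)`; so `L1dist (FCB n f) Q` is at least twice the minimum over `D` of the number
of such inputs. This minimum is attained by `FCB n g` for the minimizing `g x = ∑ i, D i (x i)`,
which is affine, and `FCB n g` is local: the parties share a uniformly random even-parity string
`t` and party `i` answers `t i + D i (x i)`.
-/

theorem card_filter_sum_eq {n : ℕ} (hn : 1 ≤ n) (b : ZMod 2) :
    #{a : Fin n → ZMod 2 | ∑ i, a i = b} = 2 ^ (n - 1) := by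
  let φ : (Fin n → ZMod 2) →+ ZMod 2 :=
    AddMonoidHom.mk' (fun a => ∑ i, a i) fun a a' => sum_add_distrib
  have hφ : ∀ c, c ∈ Set.range φ := fun c => ⟨Pi.single ⟨0, hn⟩ c, by simp [φ]⟩
  have hfibers := AddMonoidHom.card_fiber_eq_of_mem_range φ (hφ b) (hφ (b + 1))
  have htotal := card_filter_add_card_filter_not (s := univ) fun a : Fin n → ZMod 2 => φ a = b
  have hcompl : ∀ c b : ZMod 2, ¬c = b ↔ c = b + 1 := by decide
  simp only [hcompl _ b, card_univ, Fintype.card_pi, ZMod.card, prod_const,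
    Fintype.card_fin] at htotal
  have h2n : 2 ^ n = 2 * 2 ^ (n - 1) := by rw [← pow_succ']; congr 1; omega
  simp only [φ, AddMonoidHom.mk'_apply] at hfibers htotal
  omega

theorem FCB_nonneg (n : ℕ) (f : (Fin n → ZMod 2) → ZMod 2) (x a : Fin n → ZMod 2) :
    0 ≤ FCB n f x a := by
  unfold FCB; positivity

theorem sum_FCB {n : ℕ} (hn : 1 ≤ n) (f : (Fin n → ZMod 2) → ZMod 2) (x : Fin n → ZMod 2) :
    ∑ a, FCB n f x a = 1 := by
  simp only [FCB, sum_ite, sum_const, nsmul_eq_mul, card_filter_sum_eq hn, Nat.cast_pow,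
    Nat.cast_ofNat, mul_zero, add_zero]
  exact mul_inv_cancel₀ (by positivity)

theorem L1dist_le_two_mul_card {n : ℕ} {P Q : Box n} (hP0 : ∀ x a, 0 ≤ P x a)
    (hQ0 : ∀ x a, 0 ≤ Q x a) (hP1 : ∀ x, ∑ a, P x a = 1) (hQ1 : ∀ x, ∑ a, Q x a = 1) :
    L1dist P Q ≤ 2 * #{x | P x ≠ Q x} := by
  have hx : ∀ x, ∑ a, |P x a - Q x a| ≤ if P x ≠ Q x then 2 else 0 := by
    intro x
    split_ifs with h
    · calc ∑ a, |P x a - Q x a| ≤ ∑ a, (P x a + Q x a) :=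
            sum_le_sum fun a _ => abs_sub_le_iff.2
              ⟨by linarith [hP0 x a, hQ0 x a], by linarith [hP0 x a, hQ0 x a]⟩
        _ = 2 := by rw [sum_add_distrib, hP1, hQ1]; norm_num
    · simp [not_not.mp h]
  calc L1dist P Q ≤ ∑ x, if P x ≠ Q x then (2 : ℝ) else 0 := sum_le_sum fun x _ => hx x
    _ = 2 * #{x | P x ≠ Q x} := by rw [sum_ite, sum_const, sum_const_zero]; simp [mul_comm]

theorem L1dist_FCB_le {n : ℕ} (hn : 1 ≤ n) (f g : (Fin n → ZMod 2) → ZMod 2) :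
    L1dist (FCB n f) (FCB n g) ≤ 2 * #{x | f x ≠ g x} := by
  refine (L1dist_le_two_mul_card (FCB_nonneg n f) (FCB_nonneg n g) (sum_FCB hn f)
    (sum_FCB hn g)).trans ?_
  gcongr with x
  intro hfg
  ext a
  simp only [FCB, hfg]

def detBox {n : ℕ} (D : Fin n → ZMod 2 → ZMod 2) : Box n :=
  fun x a => ∏ i, if D i (x i) = a i then 1 else 0

theorem detBox_apply {n : ℕ} (D : Fin n → ZMod 2 → ZMod 2) (x a : Fin n → ZMod 2) :
    detBox D x a = if (fun i => D i (x i)) = a then 1 else 0 := by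
  simp only [detBox, Fintype.prod_boole, ← funext_iff]

theorem sum_detBox_apply {n : ℕ} (D : Fin n → ZMod 2 → ZMod 2) (x : Fin n → ZMod 2)
    (s : Finset (Fin n → ZMod 2)) :
    ∑ a ∈ s, detBox D x a = if (fun i => D i (x i)) ∈ s then 1 else 0 := by
  simp only [detBox_apply, sum_ite_eq]

theorem IsLocal.of_mixture_detBox {n : ℕ} {ι : Type*} [Fintype ι] {P : Box n} (p : ι → ℝ)
    (D : ι → Fin n → ZMod 2 → ZMod 2) (hp0 : ∀ l, 0 ≤ p l) (hp1 : ∑ l, p l = 1)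
    (hP : ∀ x a, P x a = ∑ l, p l * detBox (D l) x a) : IsLocal P := by
  let e := (Fintype.equivFin ι).symm
  refine ⟨Fintype.card ι, fun r => p (e r), fun r i xi ai => if D (e r) i xi = ai then 1 else 0,
    fun r => hp0 _, by rwa [e.sum_comp p], fun r i xi ai => by positivity,
    fun r i xi => by simp, fun x a => ?_⟩
  rw [hP, ← e.sum_comp]
  rfl

theorem exists_deterministic_decomposition {β γ : Type*} [Fintype β] [DecidableEq β]
    [Fintype γ] [DecidableEq γ] (s : β → γ → ℝ) (hs0 : ∀ b u, 0 ≤ s b u)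
    (hs1 : ∀ b, ∑ u, s b u = 1) :
    ∃ w : (β → γ) → ℝ, (∀ d, 0 ≤ w d) ∧ ∑ d, w d = 1 ∧
      ∀ b u, s b u = ∑ d, w d * if d b = u then 1 else 0 := by
  refine ⟨fun d => ∏ b, s b (d b), fun d => prod_nonneg fun b _ => hs0 b _, ?_, fun b u => ?_⟩
  · rw [← Fintype.prod_sum]
    simp [hs1]
  · have hpush : ∀ d : β → γ, (∏ b', s b' (d b')) * (if d b = u then 1 else 0) =
        ∏ b', s b' (d b') * if b' = b then (if d b' = u then 1 else 0) else 1 := by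
      intro d
      rw [prod_mul_distrib, prod_ite_eq']
      simp
    have hfactor : ∀ b', ∑ v, s b' v * (if b' = b then (if v = u then 1 else 0) else 1) =
        if b' = b then s b u else 1 := by
      intro b'
      split_ifs with h
      · subst h; simp
      · simp [hs1]
    simp only [hpush]
    rw [← Fintype.prod_sum (fun b' v => s b' v * if b' = b then (if v = u then 1 else 0) else 1),
      prod_congr rfl fun b' _ => hfactor b', prod_ite_eq']
    simp

theorem IsLocal.exists_mixture_detBox {n : ℕ} {P : Box n} (hP : IsLocal P) :
    ∃ p : (Fin n → ZMod 2 → ZMod 2) → ℝ, (∀ D, 0 ≤ p D) ∧ ∑ D, p D = 1 ∧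
      ∀ x a, P x a = ∑ D, p D * detBox D x a := by
  obtain ⟨m, q, s, hq0, hq1, hs0, hs1, hP⟩ := hP
  choose w hw0 hw1 hws using fun r i =>
    exists_deterministic_decomposition (s r i) (hs0 r i) (hs1 r i)
  refine ⟨fun D => ∑ r, q r * ∏ i, w r i (D i),
    fun D => sum_nonneg fun r _ => mul_nonneg (hq0 r) (prod_nonneg fun i _ => hw0 r i _),
    ?_, fun x a => ?_⟩
  · rw [sum_comm]
    simp only [← mul_sum, ← Fintype.prod_sum, hw1, prod_const_one, mul_one, hq1]
  · calc P x a = ∑ r, q r * ∑ D, (∏ i, w r i (D i)) * detBox D x a := by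
          simp only [hP, hws, Fintype.prod_sum, prod_mul_distrib, detBox]
      _ = ∑ D, (∑ r, q r * ∏ i, w r i (D i)) * detBox D x a := by
          simp only [mul_sum, sum_mul, mul_assoc]
          exact sum_comm

theorem two_mul_sum_filter_not_le_sum_abs_sub {α : Type*} [Fintype α] (p q : α → ℝ)
    (G : α → Prop) [DecidablePred G] (hp : ∀ a, ¬G a → p a = 0) (hpq : ∑ a, p a = ∑ a, q a) :
    2 * ∑ a with ¬G a, q a ≤ ∑ a, |p a - q a| := by
  have hG : ∑ a with G a, (p a - q a) ≤ ∑ a with G a, |p a - q a| :=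
    sum_le_sum fun a _ => le_abs_self _
  have hnotG : ∑ a with ¬G a, q a ≤ ∑ a with ¬G a, |p a - q a| :=
    sum_le_sum fun a ha => by
      rw [hp a (mem_filter.1 ha).2, zero_sub, abs_neg]
      exact le_abs_self _
  have hp_notG : ∑ a with ¬G a, p a = 0 := sum_eq_zero fun a ha => hp a (mem_filter.1 ha).2
  rw [sum_sub_distrib] at hG
  linarith [sum_filter_add_sum_filter_not univ G p, sum_filter_add_sum_filter_not univ G q,
    sum_filter_add_sum_filter_not univ G fun a => |p a - q a|]

theorem two_mul_sum_card_le_L1dist {n : ℕ} (hn : 1 ≤ n) (f : (Fin n → ZMod 2) → ZMod 2)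
    {Q : Box n} (p : (Fin n → ZMod 2 → ZMod 2) → ℝ) (hp1 : ∑ D, p D = 1)
    (hQ : ∀ x a, Q x a = ∑ D, p D * detBox D x a) :
    2 * ∑ D, p D * #{x | f x ≠ ∑ i, D i (x i)} ≤ L1dist (FCB n f) Q := by
  have hmass : ∀ x s, ∑ a ∈ s, Q x a = ∑ D, p D * if (fun i => D i (x i)) ∈ s then 1 else 0 := by
    intro x s
    simp only [hQ, ← sum_detBox_apply, mul_sum]
    exact sum_comm
  have hx : ∀ x, 2 * ∑ D, p D * (if f x ≠ ∑ i, D i (x i) then 1 else 0) ≤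
      ∑ a, |FCB n f x a - Q x a| := by
    intro x
    have key := two_mul_sum_filter_not_le_sum_abs_sub (FCB n f x) (Q x)
      (fun a => ∑ i, a i = f x) (fun a ha => if_neg ha) (by simp [sum_FCB hn, hmass, hp1])
    simpa [hmass, eq_comm] using key
  calc 2 * ∑ D, p D * #{x | f x ≠ ∑ i, D i (x i)}
      = ∑ x, 2 * ∑ D, p D * (if f x ≠ ∑ i, D i (x i) then 1 else 0) := by
        simp only [card_filter, Nat.cast_sum, Nat.cast_ite, Nat.cast_one, Nat.cast_zero, mul_sum]
        exact sum_comm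
    _ ≤ L1dist (FCB n f) Q := sum_le_sum fun x _ => hx x

theorem isAffine_sum_apply {n : ℕ} (σ : Fin n → ZMod 2 → ZMod 2) :
    IsAffine fun x => ∑ i, σ i (x i) := by
  have hbit : ∀ (h : ZMod 2 → ZMod 2) (y : ZMod 2), h y = h 0 + if h 1 ≠ h 0 then y else 0 := by
    intro h y
    obtain rfl | rfl := (by decide : ∀ y : ZMod 2, y = 0 ∨ y = 1) y
    · simp
    · generalize h 0 = u, h 1 = v
      revert u v
      decide
  refine ⟨∑ i, σ i 0, ({i | σ i 1 ≠ σ i 0} : Finset _), fun x => ?_⟩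
  rw [sum_filter, ← sum_add_distrib]
  exact sum_congr rfl fun i _ => hbit (σ i) (x i)

theorem isLocal_FCB_sum_apply {n : ℕ} (hn : 1 ≤ n) (σ : Fin n → ZMod 2 → ZMod 2) :
    IsLocal (FCB n fun x => ∑ i, σ i (x i)) := by
  refine IsLocal.of_mixture_detBox (Pc n 0) (fun t i b => t i + σ i b) (FCB_nonneg n _ 0)
    (sum_FCB hn _ 0) fun x a => ?_
  have hdet : ∀ t, detBox (fun i b => t i + σ i b) x a =
      if a - (fun i => σ i (x i)) = t then 1 else 0 := by
    intro t
    rw [detBox_apply]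
    simp only [sub_eq_iff_eq_add, eq_comm (a := a)]
    rfl
  simp only [hdet, mul_ite, mul_one, mul_zero, sum_ite_eq, mem_univ, if_true, Pc, FCB,
    Pi.sub_apply, sum_sub_distrib, sub_eq_zero]

theorem closest_local_box_is_full_correlation_general (n : ℕ) (hn : 1 ≤ n)
    (f : (Fin n → ZMod 2) → ZMod 2) :
    ∃ g : (Fin n → ZMod 2) → ZMod 2, IsAffine g ∧ IsLocal (FCB n g) ∧
      ∀ Q : Box n, IsLocal Q → L1dist (FCB n f) (FCB n g) ≤ L1dist (FCB n f) Q := by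
  obtain ⟨σ, -, hσ⟩ := exists_min_image univ
    (fun σ : Fin n → ZMod 2 → ZMod 2 => #{x | f x ≠ ∑ i, σ i (x i)}) univ_nonempty
  refine ⟨_, isAffine_sum_apply σ, isLocal_FCB_sum_apply hn σ, fun Q hQ => ?_⟩
  obtain ⟨p, hp0, hp1, hQp⟩ := hQ.exists_mixture_detBox
  calc L1dist (FCB n f) (FCB n fun x => ∑ i, σ i (x i))
      ≤ 2 * #{x | f x ≠ ∑ i, σ i (x i)} := L1dist_FCB_le hn f _
    _ = 2 * ∑ D, p D * #{x | f x ≠ ∑ i, σ i (x i)} := by rw [← sum_mul, hp1, one_mul]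
    _ ≤ 2 * ∑ D, p D * #{x | f x ≠ ∑ i, D i (x i)} := by
        gcongr 2 * ∑ D, _ * ?_ with D
        · exact hp0 D
        · exact_mod_cast hσ D (mem_univ D)
    _ ≤ L1dist (FCB n f) Q := two_mul_sum_card_le_L1dist hn f p hp1 hQp

/-- among the local boxes closest (in L¹ norm) to a non-local
full-correlation box there is a local full-correlation box. -/
theorem closest_local_box_is_full_correlation (n : ℕ) (hn : 1 ≤ n)
    (f : (Fin n → ZMod 2) → ZMod 2) (hnl : ¬ IsLocal (FCB n f)) :
    ∃ g : (Fin n → ZMod 2) → ZMod 2, IsAffine g ∧ IsLocal (FCB n g) ∧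
      ∀ Q : Box n, IsLocal Q → L1dist (FCB n f) (FCB n g) ≤ L1dist (FCB n f) Q :=
  closest_local_box_is_full_correlation_general n hn f
end
end

section
/- If the Boolean function f associated to an n-partite full-correlation box P_f depends on only k < n input variables (say x_1,...,x_k), then P_f is not an extremal point of the non-signaling polytope: P_f = ½P¹ + ½P², where P¹(a|x) = 2^{-(n-1)}·[⊕_{i=1}^k a_i = f(x_1,...,x_k) and ⊕_{i=k+1}^n a_i = 0] (suitably normalized) and P² is the analogous box with both conditions negated, and both P¹ and P² are non-signaling boxes distinct from P_f. -/
open Finset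

noncomputable section

/-- The box `P¹` of Lemma 2: uniform on outputs with `⊕_{i<k} a_i = f(x) + t` and
`⊕_{i≥k} a_i = t`. -/
def lemma2Box (n k : ℕ) (f : (Fin n → ZMod 2) → ZMod 2) (t : ZMod 2) : Box n :=
  fun x a =>
    if (∑ i ∈ Finset.univ.filter (fun i : Fin n => (i : ℕ) < k), a i) = f x + t ∧
       (∑ i ∈ Finset.univ.filter (fun i : Fin n => k ≤ (i : ℕ)), a i) = t
    then ((2:ℝ)^(n-2))⁻¹ else 0

/-!
Split the parties into the block `A` of the first `k` and the block `B` of the others, and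
record the pair of block parities `(⊕_A a, ⊕_B a)`. Since `⊕ a = ⊕_A a + ⊕_B a`, the event
`⊕ a = f x` is the disjoint union of `(⊕_A a, ⊕_B a) = (f x, 0)` and
`(⊕_A a, ⊕_B a) = (f x + 1, 1)`, which gives `P_f = ½ P¹ + ½ P²`. The block parities form a
surjective additive map onto `(ZMod 2)²`, so each of its fibres has `2^(n-2)` elements: `P¹` and
`P²` are normalised. For non-signaling, let `S` be the set of parties whose outputs are fixed.
If `S ⊇ A` then `f x` is determined by the inputs in `S`; otherwise flipping the output of a
party `j ∈ A \ S` preserves the constraint on `S` and toggles `⊕_A a`, so the marginal on `S`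
does not depend on `f x` at all.
-/

open Function

section BlockSums

variable {ι R : Type*} [AddCommMonoid R]

def blockSums (s t : Finset ι) : (ι → R) →+ R × R where
  toFun a := (∑ i ∈ s, a i, ∑ i ∈ t, a i)
  map_zero' := by simp
  map_add' a b := by simp [sum_add_distrib]

theorem blockSums_apply (s t : Finset ι) (a : ι → R) :
    blockSums s t a = (∑ i ∈ s, a i, ∑ i ∈ t, a i) := rfl

theorem blockSums_single [DecidableEq ι] (s t : Finset ι) (j : ι) (r : R) :
    blockSums s t (Pi.single j r) = (if j ∈ s then r else 0, if j ∈ t then r else 0) := by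
  simp [blockSums_apply, sum_pi_single']

theorem blockSums_surjective [DecidableEq ι] {s t : Finset ι} {j j' : ι} (hjs : j ∈ s)
    (hjt : j ∉ t) (hj's : j' ∉ s) (hj't : j' ∈ t) : Surjective (blockSums (R := R) s t) := by
  rintro ⟨u, v⟩
  refine ⟨Pi.single j u + Pi.single j' v, ?_⟩
  simp [blockSums_single, hjs, hjt, hj's, hj't]

end BlockSums

theorem AddMonoidHom.card_fiber_mul_card_eq {G H : Type*} [AddGroup G] [Fintype G] [AddMonoid H]
    [Fintype H] [DecidableEq H] (φ : G →+ H) (hφ : Surjective φ) (w : H) :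
    #{g | φ g = w} * Fintype.card H = Fintype.card G := by
  calc #{g | φ g = w} * Fintype.card H = ∑ v : H, #{g | φ g = v} := by
        rw [sum_congr rfl fun v _ => AddMonoidHom.card_fiber_eq_of_mem_range φ (hφ v) (hφ w),
          sum_const, card_univ, smul_eq_mul, mul_comm]
    _ = Fintype.card G := by
        rw [← card_univ]
        exact (card_eq_sum_card_fiberwise (f := φ) (t := univ) fun _ _ => mem_univ _).symm

theorem Finset.sum_filter_comp_add_right {G M : Type*} [AddGroup G] [Fintype G] [AddCommMonoid M]
    {p : G → Prop} [DecidablePred p] {e : G} (hp : ∀ a, p (a + e) ↔ p a) (g : G → M) :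
    ∑ a with p a, g (a + e) = ∑ a with p a, g a := by
  simp only [sum_filter]
  exact Fintype.sum_equiv (Equiv.addRight e) _ _ fun a => by simp [hp]

theorem ZMod.two_eq_or_eq_add_one (u v : ZMod 2) : v = u ∨ v = u + 1 := by
  revert u v; decide

section Lemma2Box

variable {n k : ℕ} {f : (Fin n → ZMod 2) → ZMod 2}

abbrev splitParity (n k : ℕ) : (Fin n → ZMod 2) →+ ZMod 2 × ZMod 2 :=
  blockSums {i | (i : ℕ) < k} {i | k ≤ (i : ℕ)}

theorem sum_eq_splitParity_fst_add_snd (a : Fin n → ZMod 2) :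
    ∑ i, a i = (splitParity n k a).1 + (splitParity n k a).2 := by
  simp only [blockSums_apply, ← not_lt]
  exact (sum_filter_add_sum_filter_not _ _ _).symm

theorem splitParity_surjective (hk : 1 ≤ k) (hkn : k < n) : Surjective (splitParity n k) :=
  blockSums_surjective (j := ⟨0, by omega⟩) (j' := ⟨k, hkn⟩) (by simpa) (by simp; omega)
    (by simp) (by simp)

theorem card_splitParity_fiber (hk : 1 ≤ k) (hkn : k < n) (w : ZMod 2 × ZMod 2) :
    #{a | splitParity n k a = w} = 2 ^ (n - 2) := by
  have h := (splitParity n k).card_fiber_mul_card_eq (splitParity_surjective hk hkn) w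
  have hcard : 2 ^ n = 2 ^ (n - 2) * (2 * 2) := by
    rw [← pow_two, ← pow_add, Nat.sub_add_cancel (by omega)]
  rw [Fintype.card_prod, ZMod.card, Fintype.card_fun, Fintype.card_fin, ZMod.card, hcard] at h
  exact Nat.eq_of_mul_eq_mul_right (by norm_num) h

theorem lemma2Box_eq_ite (t : ZMod 2) (x a : Fin n → ZMod 2) :
    lemma2Box n k f t x a =
      if splitParity n k a = (f x + t, t) then ((2:ℝ) ^ (n - 2))⁻¹ else 0 := by
  simp [lemma2Box, blockSums_apply, Prod.ext_iff]

theorem lemma2Box_nonneg (t : ZMod 2) (x a : Fin n → ZMod 2) : 0 ≤ lemma2Box n k f t x a := by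
  rw [lemma2Box_eq_ite]; split_ifs <;> positivity

theorem sum_lemma2Box (hk : 1 ≤ k) (hkn : k < n) (t : ZMod 2) (x : Fin n → ZMod 2) :
    ∑ a, lemma2Box n k f t x a = 1 := by
  simp only [lemma2Box_eq_ite]
  rw [← sum_filter, sum_const, card_splitParity_fiber hk hkn, nsmul_eq_mul]
  push_cast
  exact mul_inv_cancel₀ (by positivity)

theorem sum_ite_splitParity_eq_add_one {S : Finset (Fin n)} {j : Fin n} (hjk : (j : ℕ) < k)
    (hjS : j ∉ S) (aS : Fin n → ZMod 2) (u v : ZMod 2) (c : ℝ) :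
    ∑ a with ∀ i ∈ S, a i = aS i, (if splitParity n k a = (u, v) then c else 0) =
      ∑ a with ∀ i ∈ S, a i = aS i, (if splitParity n k a = (u + 1, v) then c else 0) := by
  have hinv : ∀ a : Fin n → ZMod 2,
      (∀ i ∈ S, (a + Pi.single j 1 : Fin n → ZMod 2) i = aS i) ↔ ∀ i ∈ S, a i = aS i := by
    refine fun a => forall₂_congr fun i hi => ?_
    rw [Pi.add_apply, Pi.single_eq_of_ne (ne_of_mem_of_not_mem hi hjS), add_zero]
  rw [← sum_filter_comp_add_right hinv]
  refine sum_congr rfl fun a _ => ?_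
  have hflip : splitParity n k (Pi.single j 1) = (1, 0) := by
    simp [blockSums_single, hjk, hjk.not_ge]
  have huv : ((u, v) : ZMod 2 × ZMod 2) = (u + 1, v) + (1, 0) := by
    ext <;> simp [add_assoc, CharTwo.add_self_eq_zero]
  simp only [map_add, hflip, huv, add_left_inj]

theorem isNonSignaling_lemma2Box
    (hdep : ∀ x x' : Fin n → ZMod 2, (∀ i : Fin n, (i : ℕ) < k → x i = x' i) → f x = f x')
    (t : ZMod 2) : IsNonSignaling (lemma2Box n k f t) := by
  intro S x x' hxx' aS
  by_cases hlow : ∀ i : Fin n, (i : ℕ) < k → i ∈ S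
  · simp only [lemma2Box, hdep x x' fun i hi => hxx' i (hlow i hi)]
  push Not at hlow
  obtain ⟨j, hjk, hjS⟩ := hlow
  simp only [lemma2Box_eq_ite]
  obtain h | h := ZMod.two_eq_or_eq_add_one (f x + t) (f x' + t)
  · rw [h]
  · rw [h, ← sum_ite_splitParity_eq_add_one hjk hjS]

theorem isNSBox_lemma2Box (hk : 1 ≤ k) (hkn : k < n)
    (hdep : ∀ x x' : Fin n → ZMod 2, (∀ i : Fin n, (i : ℕ) < k → x i = x' i) → f x = f x')
    (t : ZMod 2) : IsNSBox (lemma2Box n k f t) :=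
  ⟨lemma2Box_nonneg t, sum_lemma2Box hk hkn t, isNonSignaling_lemma2Box hdep t⟩

theorem FCB_eq_half_lemma2Box_add_half (hn : 2 ≤ n) (x a : Fin n → ZMod 2) :
    FCB n f x a = 1 / 2 * lemma2Box n k f 0 x a + 1 / 2 * lemma2Box n k f 1 x a := by
  have hpow : ((2:ℝ) ^ (n - 1))⁻¹ = 1 / 2 * ((2:ℝ) ^ (n - 2))⁻¹ := by
    rw [show n - 1 = n - 2 + 1 by omega, pow_succ, mul_inv]; ring
  simp only [FCB, lemma2Box_eq_ite, sum_eq_splitParity_fst_add_snd (k := k) a, hpow]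
  obtain ⟨p, q⟩ := splitParity n k a
  generalize f x = w
  have hbit : ∀ u : ZMod 2, u = 0 ∨ u = 1 := by decide
  rcases hbit p with rfl | rfl <;> rcases hbit q with rfl | rfl <;>
    rcases hbit w with rfl | rfl <;> simp [CharTwo.add_self_eq_zero]

theorem lemma2Box_ne_FCB (hk : 1 ≤ k) (hkn : k < n) (t : ZMod 2) :
    lemma2Box n k f t ≠ FCB n f := by
  intro h
  let x : Fin n → ZMod 2 := 0
  -- an output with `⊕ a = f x` on which `P¹` (resp. `P²`) vanishes
  obtain ⟨a, ha⟩ := splitParity_surjective hk hkn (f x + t + 1, t + 1)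
  have hsum : ∑ i, a i = f x := by
    have hbits : ∀ w t : ZMod 2, w + t + 1 + (t + 1) = w := by decide
    rw [sum_eq_splitParity_fst_add_snd (k := k), ha, hbits]
  have hL : lemma2Box n k f t x a = 0 := by
    rw [lemma2Box_eq_ite, ha, if_neg]
    simp
  have hF : FCB n f x a ≠ 0 := by simp [FCB, hsum]
  exact hF (h ▸ hL)

theorem not_isExtremalNS_of_eq_midpoint {P P1 P2 : Box n} (hP1 : IsNSBox P1) (hP2 : IsNSBox P2)
    (hmid : ∀ x a, P x a = 1 / 2 * P1 x a + 1 / 2 * P2 x a) (hne : P1 ≠ P) : ¬ IsExtremalNS P :=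
  fun hext => hne (hext.2 (1 / 2) P1 P2 (by norm_num) (by norm_num) hP1 hP2
    (fun x a => by rw [hmid]; norm_num)).1

end Lemma2Box

/-- if `f` depends only on the first `k < n` variables, then `FCB f` is
a proper mixture of two non-signaling boxes, hence not extremal. -/
theorem fcb_not_extremal_of_dummy_variable (n k : ℕ) (hk : 1 ≤ k) (hkn : k < n)
    (f : (Fin n → ZMod 2) → ZMod 2)
    (hdep : ∀ x x' : Fin n → ZMod 2, (∀ i : Fin n, (i : ℕ) < k → x i = x' i) → f x = f x') :
    IsNSBox (lemma2Box n k f 0) ∧ IsNSBox (lemma2Box n k f 1) ∧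
    lemma2Box n k f 0 ≠ FCB n f ∧ lemma2Box n k f 1 ≠ FCB n f ∧
    (∀ x a, FCB n f x a = (1/2) * lemma2Box n k f 0 x a + (1/2) * lemma2Box n k f 1 x a) ∧
    ¬ IsExtremalNS (FCB n f) := by
  have hNS := isNSBox_lemma2Box hk hkn hdep
  have hmix := FCB_eq_half_lemma2Box_add_half (k := k) (f := f) (by omega)
  exact ⟨hNS 0, hNS 1, lemma2Box_ne_FCB hk hkn 0, lemma2Box_ne_FCB hk hkn 1, hmix,
    not_isExtremalNS_of_eq_midpoint (hNS 0) (hNS 1) hmix (lemma2Box_ne_FCB hk hkn 0)⟩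
end
end

section
/- If the Boolean function f of an n-partite full-correlation box splits as f(x_1,...,x_n) = f_1(x_1,...,x_m) ⊕ f_2(x_{m+1},...,x_n) for some 1 ≤ m < n (the two parts depending on disjoint sets of variables), then P_f is not extremal in the non-signaling polytope: P_f = ½P¹ + ½P² where P¹ is uniform on outputs satisfying ⊕_{i≤m} a_i = f_1 and ⊕_{i>m} a_i = f_2, and P² is uniform on outputs satisfying the negations of both conditions. -/
open Finset

noncomputable section

/-- The box `P¹` of Lemma 3: uniform on outputs with `⊕_{i<m} a_i = f₁(x) + t` and
`⊕_{i≥m} a_i = f₂(x) + t`. -/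
def lemma3Box (n m : ℕ) (f₁ f₂ : (Fin n → ZMod 2) → ZMod 2) (t : ZMod 2) : Box n :=
  fun x a =>
    if (∑ i ∈ Finset.univ.filter (fun i : Fin n => (i : ℕ) < m), a i) = f₁ x + t ∧
       (∑ i ∈ Finset.univ.filter (fun i : Fin n => m ≤ (i : ℕ)), a i) = f₂ x + t
    then ((2:ℝ)^(n-2))⁻¹ else 0

namespace FCBaux

open Finset

variable {n : ℕ}

lemma zmod2_cases : ∀ u u' : ZMod 2, u' = u ∨ u' = u + 1 := by decide
lemma zmod2_shift : ∀ s u : ZMod 2, (s + 1 = u) ↔ (s = u + 1) := by decide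
lemma zmod2_aa : ∀ x : ZMod 2, x + 1 + 1 = x := by decide

lemma update_invol (a : Fin n → ZMod 2) (j : Fin n) :
    Function.update (Function.update a j (a j + 1)) j
      (Function.update a j (a j + 1) j + 1) = a := by
  funext i
  by_cases h : i = j
  · subst h; simp [Function.update_self, zmod2_aa]
  · simp [Function.update_of_ne h]

lemma flip_sum (S : Finset (Fin n)) (aS : Fin n → ZMod 2) (j : Fin n) (hj : j ∉ S)
    (g : (Fin n → ZMod 2) → ℝ) :
    ∑ a ∈ univ.filter (fun a : Fin n → ZMod 2 => ∀ i ∈ S, a i = aS i), g a =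
    ∑ a ∈ univ.filter (fun a : Fin n → ZMod 2 => ∀ i ∈ S, a i = aS i),
      g (Function.update a j (a j + 1)) := by
  refine Finset.sum_nbij' (fun a => Function.update a j (a j + 1))
    (fun a => Function.update a j (a j + 1)) ?_ ?_ ?_ ?_ ?_
  · intro a ha
    simp only [mem_filter, mem_univ, true_and] at ha ⊢
    intro i hi
    rw [Function.update_of_ne (by rintro rfl; exact hj hi)]
    exact ha i hi
  · intro a ha
    simp only [mem_filter, mem_univ, true_and] at ha ⊢
    intro i hi
    rw [Function.update_of_ne (by rintro rfl; exact hj hi)]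
    exact ha i hi
  · intro a _; exact update_invol a j
  · intro a _; exact update_invol a j
  · intro a _
    rw [update_invol a j]

lemma sum_update_mem (L : Finset (Fin n)) (a : Fin n → ZMod 2) (j : Fin n) (hj : j ∈ L) :
    ∑ i ∈ L, Function.update a j (a j + 1) i = (∑ i ∈ L, a i) + 1 := by
  rw [Finset.sum_update_of_mem hj, ← Finset.add_sum_erase L a hj,
      Finset.sdiff_singleton_eq_erase]
  ring

lemma sum_update_notMem (L : Finset (Fin n)) (a : Fin n → ZMod 2) (j : Fin n) (hj : j ∉ L) :
    ∑ i ∈ L, Function.update a j (a j + 1) i = ∑ i ∈ L, a i :=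
  Finset.sum_congr rfl fun i hi => Function.update_of_ne (by rintro rfl; exact hj hi) _ _

/-- The marginal sum for the parity-constrained box. -/
def M (m : ℕ) (S : Finset (Fin n)) (aS : Fin n → ZMod 2) (κ : ℝ) (u v : ZMod 2) : ℝ :=
  ∑ a ∈ univ.filter (fun a : Fin n → ZMod 2 => ∀ i ∈ S, a i = aS i),
    (if (∑ i ∈ univ.filter (fun i : Fin n => (i : ℕ) < m), a i) = u ∧
        (∑ i ∈ univ.filter (fun i : Fin n => m ≤ (i : ℕ)), a i) = v then κ else 0)

lemma flip_stepL (m : ℕ) (S : Finset (Fin n)) (aS : Fin n → ZMod 2) (κ : ℝ)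
    (j : Fin n) (hjL : (j : ℕ) < m) (hjS : j ∉ S) (u v : ZMod 2) :
    M m S aS κ u v = M m S aS κ (u + 1) v := by
  unfold M
  rw [flip_sum S aS j hjS]
  refine Finset.sum_congr rfl fun a _ => ?_
  rw [sum_update_mem _ a j (by simp [hjL]),
      sum_update_notMem _ a j (by simp [Nat.not_le.mpr hjL])]
  simp only [zmod2_shift]

lemma flip_stepR (m : ℕ) (S : Finset (Fin n)) (aS : Fin n → ZMod 2) (κ : ℝ)
    (j : Fin n) (hjR : m ≤ (j : ℕ)) (hjS : j ∉ S) (u v : ZMod 2) :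
    M m S aS κ u v = M m S aS κ u (v + 1) := by
  unfold M
  rw [flip_sum S aS j hjS]
  refine Finset.sum_congr rfl fun a _ => ?_
  rw [sum_update_notMem (univ.filter (fun i : Fin n => (i : ℕ) < m)) a j
        (by simp [Nat.not_lt.mpr hjR]),
      sum_update_mem (univ.filter (fun i : Fin n => m ≤ (i : ℕ))) a j (by simp [hjR])]
  simp only [zmod2_shift]

lemma marginal_congr (m : ℕ) (S : Finset (Fin n)) (aS : Fin n → ZMod 2) (κ : ℝ)
    (u u' v v' : ZMod 2)
    (hu : univ.filter (fun i : Fin n => (i : ℕ) < m) ⊆ S → u = u')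
    (hv : univ.filter (fun i : Fin n => m ≤ (i : ℕ)) ⊆ S → v = v') :
    M m S aS κ u v = M m S aS κ u' v' := by
  have step1 : M m S aS κ u v = M m S aS κ u' v := by
    by_cases hL : univ.filter (fun i : Fin n => (i : ℕ) < m) ⊆ S
    · rw [hu hL]
    · obtain ⟨j, hjL, hjS⟩ := Finset.not_subset.mp hL
      simp only [mem_filter, mem_univ, true_and] at hjL
      rcases zmod2_cases u u' with h | h
      · rw [h]
      · rw [h]; exact flip_stepL m S aS κ j hjL hjS u v
  rw [step1]
  by_cases hR : univ.filter (fun i : Fin n => m ≤ (i : ℕ)) ⊆ S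
  · rw [hv hR]
  · obtain ⟨j, hjR, hjS⟩ := Finset.not_subset.mp hR
    simp only [mem_filter, mem_univ, true_and] at hjR
    rcases zmod2_cases v v' with h | h
    · rw [h]
    · rw [h]; exact flip_stepR m S aS κ j hjR hjS u' v

lemma count (m : ℕ) (hm : 1 ≤ m) (hmn : m < n) (aS : Fin n → ZMod 2) (u v : ZMod 2) :
    M m ∅ aS (1:ℝ) u v = 2^(n-2) := by
  have hL : ¬ univ.filter (fun i : Fin n => (i : ℕ) < m) ⊆ (∅ : Finset (Fin n)) := by
    intro h
    exact absurd (h (by simp; omega : (⟨0, by omega⟩ : Fin n) ∈ _))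
      (Finset.notMem_empty _)
  have hR : ¬ univ.filter (fun i : Fin n => m ≤ (i : ℕ)) ⊆ (∅ : Finset (Fin n)) := by
    intro h
    exact absurd (h (by simp : (⟨m, hmn⟩ : Fin n) ∈ _)) (Finset.notMem_empty _)
  have hall : ∀ u' v', M m (∅ : Finset (Fin n)) aS 1 u' v' = M m ∅ aS 1 u v :=
    fun u' v' => marginal_congr m ∅ aS 1 u' u v' v
      (fun h => absurd h hL) (fun h => absurd h hR)
  have key : ∑ u' : ZMod 2, ∑ v' : ZMod 2, M m (∅ : Finset (Fin n)) aS 1 u' v' = (2:ℝ)^n := by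
    unfold M
    rw [show (univ.filter (fun a : Fin n → ZMod 2 => ∀ i ∈ (∅:Finset (Fin n)), a i = aS i)) = univ
        by simp]
    rw [Finset.sum_congr rfl (fun (u' : ZMod 2) _ => Finset.sum_comm), Finset.sum_comm]
    have h1 : ∀ a : Fin n → ZMod 2,
        ∑ u' : ZMod 2, ∑ v' : ZMod 2,
          (if (∑ i ∈ univ.filter (fun i : Fin n => (i : ℕ) < m), a i) = u' ∧
              (∑ i ∈ univ.filter (fun i : Fin n => m ≤ (i : ℕ)), a i) = v' then (1:ℝ) else 0) = 1 := by
      intro a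
      simp [ite_and, Finset.sum_ite_eq]
    rw [Finset.sum_congr rfl (fun a _ => h1 a)]
    simp [Finset.card_univ]
  have key2 : (4:ℝ) * M m (∅ : Finset (Fin n)) aS 1 u v = (2:ℝ)^n := by
    rw [← key, Finset.sum_congr rfl (fun (u' : ZMod 2) _ =>
      Finset.sum_congr rfl (fun (v' : ZMod 2) _ => hall u' v'))]
    simp [Finset.sum_const, Finset.card_univ]
    ring
  have hpow : (2:ℝ)^n = 4 * (2:ℝ)^(n-2) := by
    conv_lhs => rw [show n = (n-2)+2 by omega]
    rw [pow_add]; ring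
  rw [hpow] at key2
  linarith

lemma M_kappa (m : ℕ) (S : Finset (Fin n)) (aS : Fin n → ZMod 2) (κ : ℝ) (u v : ZMod 2) :
    M m S aS κ u v = κ * M m S aS 1 u v := by
  unfold M
  rw [Finset.mul_sum]
  exact Finset.sum_congr rfl fun a _ => by split_ifs <;> simp

end FCBaux

/-- if `f` splits as an XOR of two functions on disjoint variable sets,
then `FCB f` is a proper mixture of two non-signaling boxes, hence not extremal. -/
theorem fcb_not_extremal_of_split (n m : ℕ) (hm : 1 ≤ m) (hmn : m < n)
    (f f₁ f₂ : (Fin n → ZMod 2) → ZMod 2)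
    (h₁ : ∀ x x' : Fin n → ZMod 2, (∀ i : Fin n, (i : ℕ) < m → x i = x' i) → f₁ x = f₁ x')
    (h₂ : ∀ x x' : Fin n → ZMod 2, (∀ i : Fin n, m ≤ (i : ℕ) → x i = x' i) → f₂ x = f₂ x')
    (hf : ∀ x, f x = f₁ x + f₂ x) :
    IsNSBox (lemma3Box n m f₁ f₂ 0) ∧ IsNSBox (lemma3Box n m f₁ f₂ 1) ∧
    lemma3Box n m f₁ f₂ 0 ≠ lemma3Box n m f₁ f₂ 1 ∧
    (∀ x a, FCB n f x a =
      (1/2) * lemma3Box n m f₁ f₂ 0 x a + (1/2) * lemma3Box n m f₁ f₂ 1 x a) ∧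
    ¬ IsExtremalNS (FCB n f) := by
  have hκpos : (0:ℝ) < ((2:ℝ)^(n-2))⁻¹ := by positivity
  -- non-signaling box property, for both t
  have hNS : ∀ t : ZMod 2, IsNSBox (lemma3Box n m f₁ f₂ t) := by
    intro t
    refine ⟨?_, ?_, ?_⟩
    · intro x a
      simp only [lemma3Box]
      split_ifs
      · positivity
      · exact le_rfl
    · intro x
      have e : ∑ a, lemma3Box n m f₁ f₂ t x a
          = FCBaux.M m (∅ : Finset (Fin n)) (fun _ => 0) ((2:ℝ)^(n-2))⁻¹ (f₁ x + t) (f₂ x + t) := by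
        simp only [lemma3Box, FCBaux.M]
        rw [show (univ.filter (fun a : Fin n → ZMod 2 =>
            ∀ i ∈ (∅:Finset (Fin n)), a i = (fun _ => (0:ZMod 2)) i)) = univ by simp]
      rw [e, FCBaux.M_kappa, FCBaux.count m hm hmn]
      exact inv_mul_cancel₀ (by positivity)
    · intro S x x' hagree aS
      have e1 : ∀ y : Fin n → ZMod 2,
          ∑ a ∈ univ.filter (fun a : Fin n → ZMod 2 => ∀ i ∈ S, a i = aS i),
            lemma3Box n m f₁ f₂ t y a
          = FCBaux.M m S aS ((2:ℝ)^(n-2))⁻¹ (f₁ y + t) (f₂ y + t) := by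
        intro y
        simp only [lemma3Box, FCBaux.M]
      rw [e1 x, e1 x']
      refine FCBaux.marginal_congr _ _ _ _ _ _ _ _ ?_ ?_
      · intro hsub
        rw [h₁ x x' (fun i hi => hagree i (hsub (by simp [hi])))]
      · intro hsub
        rw [h₂ x x' (fun i hi => hagree i (hsub (by simp [hi])))]
  -- the mixture identity
  have hmix : ∀ x a, FCB n f x a =
      (1/2) * lemma3Box n m f₁ f₂ 0 x a + (1/2) * lemma3Box n m f₁ f₂ 1 x a := by
    intro x a
    have hsplit : (∑ i, a i) = (∑ i ∈ univ.filter (fun i : Fin n => (i:ℕ) < m), a i)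
        + (∑ i ∈ univ.filter (fun i : Fin n => m ≤ (i:ℕ)), a i) := by
      rw [show (univ.filter (fun i : Fin n => m ≤ (i:ℕ)))
          = univ.filter (fun i : Fin n => ¬ (i:ℕ) < m) by simp [Nat.not_lt]]
      exact (Finset.sum_filter_add_sum_filter_not univ _ a).symm
    simp only [FCB, lemma3Box]
    rw [hsplit, hf x]
    set u := ∑ i ∈ univ.filter (fun i : Fin n => (i:ℕ) < m), a i with hu
    set v := ∑ i ∈ univ.filter (fun i : Fin n => m ≤ (i:ℕ)), a i with hv
    have hk : ((2:ℝ)^(n-1))⁻¹ = 1/2 * ((2:ℝ)^(n-2))⁻¹ := by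
      have h2 : (2:ℝ)^(n-1) = 2 * (2:ℝ)^(n-2) := by
        conv_lhs => rw [show n-1 = (n-2)+1 by omega]
        rw [pow_succ]; ring
      rw [h2, mul_inv]; ring
    have d1 : ∀ u v p q : ZMod 2, (u+v = p+q) ↔
        ((u = p + 0 ∧ v = q + 0) ∨ (u = p+1 ∧ v = q+1)) := by decide
    have d2 : ∀ u v p q : ZMod 2,
        ¬((u = p + 0 ∧ v = q + 0) ∧ (u = p+1 ∧ v = q+1)) := by decide
    by_cases hA : u = f₁ x + 0 ∧ v = f₂ x + 0
    · rw [if_pos ((d1 u v (f₁ x) (f₂ x)).mpr (Or.inl hA)), if_pos hA,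
        if_neg (fun hB => d2 u v (f₁ x) (f₂ x) ⟨hA, hB⟩)]
      rw [hk]; ring
    · by_cases hB : u = f₁ x + 1 ∧ v = f₂ x + 1
      · rw [if_pos ((d1 u v (f₁ x) (f₂ x)).mpr (Or.inr hB)), if_neg hA, if_pos hB]
        rw [hk]; ring
      · rw [if_neg (fun h => (d1 u v (f₁ x) (f₂ x)).mp h |>.elim hA hB),
          if_neg hA, if_neg hB]
        ring
  -- the two boxes differ
  have hneq : lemma3Box n m f₁ f₂ 0 ≠ lemma3Box n m f₁ f₂ 1 := by
    intro heq
    set x0 : Fin n → ZMod 2 := fun _ => 0 with hx0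
    set i0 : Fin n := ⟨0, by omega⟩ with hi0
    set iM : Fin n := ⟨m, hmn⟩ with hiM
    set a0 : Fin n → ZMod 2 :=
      fun i => (if i = i0 then f₁ x0 else 0) + (if i = iM then f₂ x0 else 0) with ha0
    have hLmem : i0 ∈ univ.filter (fun i : Fin n => (i:ℕ) < m) := by
      simp [hi0]; omega
    have hLnot : iM ∉ univ.filter (fun i : Fin n => (i:ℕ) < m) := by
      simp [hiM]
    have hRmem : iM ∈ univ.filter (fun i : Fin n => m ≤ (i:ℕ)) := by
      simp [hiM]
    have hRnot : i0 ∉ univ.filter (fun i : Fin n => m ≤ (i:ℕ)) := by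
      simp [hi0]; omega
    have hL : (∑ i ∈ univ.filter (fun i : Fin n => (i:ℕ) < m), a0 i) = f₁ x0 := by
      simp only [ha0]
      rw [Finset.sum_add_distrib, Finset.sum_ite_eq' _ i0 (fun _ => f₁ x0),
        Finset.sum_ite_eq' _ iM (fun _ => f₂ x0), if_pos hLmem, if_neg hLnot, add_zero]
    have hR : (∑ i ∈ univ.filter (fun i : Fin n => m ≤ (i:ℕ)), a0 i) = f₂ x0 := by
      simp only [ha0]
      rw [Finset.sum_add_distrib, Finset.sum_ite_eq' _ i0 (fun _ => f₁ x0),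
        Finset.sum_ite_eq' _ iM (fun _ => f₂ x0), if_pos hRmem, if_neg hRnot, zero_add]
    have hval := congrFun (congrFun heq x0) a0
    simp only [lemma3Box] at hval
    rw [hL, hR] at hval
    rw [if_pos ⟨(add_zero _).symm, (add_zero _).symm⟩,
      if_neg (fun h => (by decide : ∀ p : ZMod 2, ¬ p = p + 1) (f₁ x0) h.1)] at hval
    exact hκpos.ne' hval
  refine ⟨hNS 0, hNS 1, hneq, hmix, ?_⟩
  rintro ⟨-, hext⟩
  obtain ⟨e0, e1⟩ := hext (1/2) (lemma3Box n m f₁ f₂ 0) (lemma3Box n m f₁ f₂ 1)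
    (by norm_num) (by norm_num) (hNS 0) (hNS 1)
    (by intro x a; rw [hmix x a]; norm_num)
  exact hneq (e0.trans e1.symm)
end
end

section
/- The n-partite Popescu–Rohrlich box, defined by P(a|x) = 2^{-(n-1)} if ⊕_{i=1}^n a_i = ∏_{i=1}^n x_i and 0 otherwise, is an extremal point of the polytope of n-partite non-signaling boxes with binary inputs and outputs: if P = εP¹ + (1−ε)P² with 0 < ε < 1 and P¹, P² non-signaling, then P¹ = P² = P. -/
open Finset

noncomputable section

lemma z2a (c u : ZMod 2) : c + u + (u + 1) = c + 1 := by revert c u; decide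
lemma z2b (c u : ZMod 2) : c + 1 + u + (u + 1) = c := by revert c u; decide
lemma z2d (u t : ZMod 2) : u + t + t = u := by revert u t; decide
lemma z2c (u : ZMod 2) : u + 1 + 1 = u := by revert u; decide

/-! A non-signaling box `Q` that appears with positive weight in a decomposition of the PR box
vanishes wherever the PR box does. Non-signaling for the parties other than `i` then says that
`Q` takes the same value at two points of the PR support that differ only in party `i`: the
marginal of `Q` on those parties is a single entry of `Q`. These moves connect the whole PR
support. Every input can be raised to the all-ones input one party at a time, and there any two
odd outputs are linked by flipping two outputs `a j`, `a k` along the cycle of inputs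
`1 → 1 - eⱼ → 1 - eⱼ - eₖ → 1 - eₖ → 1`. So `Q` is constant on the support, and normalization
fixes the constant to `2^{-(n-1)}`. -/

lemma sum_add_single {ι M : Type*} [Fintype ι] [DecidableEq ι] [AddCommMonoid M] (a : ι → M)
    (i : ι) (t : M) : ∑ j, (a + Pi.single i t : ι → M) j = ∑ j, a j + t := by
  simp [Finset.sum_add_distrib]

lemma card_filter_sum_eq_mul {ι G : Type*} [Fintype ι] [DecidableEq ι] [AddCommGroup G]
    [Fintype G] [DecidableEq G] (i₀ : ι) (c : G) :
    #{a : ι → G | ∑ i, a i = c} * Fintype.card G = Fintype.card G ^ Fintype.card ι := by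
  have hfiber : ∀ c', #{a : ι → G | ∑ i, a i = c'} = #{a : ι → G | ∑ i, a i = c} := fun c' =>
    card_equiv (Equiv.addRight (Pi.single i₀ (c - c'))) fun a => by
      simp only [mem_filter, mem_univ, true_and, Equiv.coe_addRight, sum_add_single,
        ← eq_sub_iff_add_eq, sub_sub_cancel]
  calc #{a : ι → G | ∑ i, a i = c} * Fintype.card G
      = ∑ c' : G, #{a : ι → G | ∑ i, a i = c'} := by simp [hfiber, mul_comm]
    _ = #(univ : Finset (ι → G)) := (card_eq_sum_card_fiberwise fun a _ => mem_univ _).symm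
    _ = Fintype.card G ^ Fintype.card ι := by simp

lemma card_filter_sum_eq_two_pow {n : ℕ} (hn : 1 ≤ n) (c : ZMod 2) :
    #{a : Fin n → ZMod 2 | ∑ i, a i = c} = 2 ^ (n - 1) := by
  obtain ⟨m, rfl⟩ : ∃ m, n = m + 1 := ⟨n - 1, by omega⟩
  have h := card_filter_sum_eq_mul (0 : Fin (m + 1)) c
  rw [ZMod.card, Fintype.card_fin, pow_succ] at h
  exact Nat.eq_of_mul_eq_mul_right two_pos h

lemma eq_of_sum_eq_of_eq_off {ι M : Type*} [Fintype ι] [DecidableEq ι] [AddCancelCommMonoid M]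
    {a b : ι → M} {i : ι} (hab : ∀ j ≠ i, a j = b j) (hsum : ∑ j, a j = ∑ j, b j) : a = b := by
  have hoff : ∑ j ∈ univ.erase i, a j = ∑ j ∈ univ.erase i, b j :=
    sum_congr rfl fun j hj => hab j (ne_of_mem_erase hj)
  have hi : a i = b i := by
    rwa [← add_sum_erase _ _ (mem_univ i), ← add_sum_erase _ b (mem_univ i), hoff,
      add_left_inj] at hsum
  funext j
  by_cases hj : j = i
  · rw [hj, hi]
  · exact hab j hj

lemma FCB_isNSBox {n : ℕ} (hn : 1 ≤ n) (f : (Fin n → ZMod 2) → ZMod 2) : IsNSBox (FCB n f) := by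
  refine ⟨fun x a => by unfold FCB; split_ifs <;> positivity, fun x => ?_, ?_⟩
  · simp only [FCB]
    rw [← sum_filter, sum_const, card_filter_sum_eq_two_pow hn, nsmul_eq_mul]
    push_cast
    exact mul_inv_cancel₀ (by positivity)
  · intro S x x' hxx' aS
    by_cases hS : S = univ
    · rw [show x = x' from funext fun j => hxx' j (hS ▸ mem_univ j)]
    obtain ⟨i₀, hi₀⟩ : ∃ i, i ∉ S := by simpa [eq_univ_iff_forall] using hS
    have hsingle : ∀ (a : Fin n → ZMod 2) (t : ZMod 2) (j : Fin n), j ∈ S →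
        (a + Pi.single i₀ t : Fin n → ZMod 2) j = a j := fun a t j hj => by
      simp [show j ≠ i₀ by rintro rfl; exact hi₀ hj]
    refine sum_equiv (Equiv.addRight (Pi.single i₀ (f x' - f x))) (fun a => ?_) fun a _ => ?_
    · simp only [mem_filter, mem_univ, true_and, Equiv.coe_addRight]
      exact forall₂_congr fun j hj => by rw [hsingle a _ j hj]
    · simp only [FCB, Equiv.coe_addRight, sum_add_single, ← eq_sub_iff_add_eq, sub_sub_cancel]

lemma eq_zero_and_eq_zero_of_convex_comb_eq_zero {ε p q : ℝ} (hε₀ : 0 < ε) (hε₁ : ε < 1)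
    (hp : 0 ≤ p) (hq : 0 ≤ q) (h : ε * p + (1 - ε) * q = 0) : p = 0 ∧ q = 0 := by
  obtain ⟨hεp, hεq⟩ := (add_eq_zero_iff_of_nonneg (mul_nonneg hε₀.le hp)
    (mul_nonneg (sub_pos.2 hε₁).le hq)).1 h
  exact ⟨(mul_eq_zero.1 hεp).resolve_left hε₀.ne',
    (mul_eq_zero.1 hεq).resolve_left (sub_pos.2 hε₁).ne'⟩

def SupportedOnFCB {n : ℕ} (f : (Fin n → ZMod 2) → ZMod 2) (Q : Box n) : Prop :=
  ∀ x a, ∑ i, a i ≠ f x → Q x a = 0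

section Support

variable {n : ℕ} {f : (Fin n → ZMod 2) → ZMod 2} {Q : Box n}

lemma SupportedOnFCB.marginal_erase_eq (hQ : SupportedOnFCB f Q) (i : Fin n)
    {x a : Fin n → ZMod 2} (ha : ∑ j, a j = f x) :
    ∑ c ∈ univ.filter (fun c : Fin n → ZMod 2 => ∀ j ∈ univ.erase i, c j = a j), Q x c =
      Q x a := by
  refine sum_eq_single_of_mem a (by simp) fun c hc hca => hQ x c fun hc' => hca ?_
  simp only [mem_filter, mem_univ, mem_erase, true_and, and_true] at hc
  exact eq_of_sum_eq_of_eq_off hc (hc'.trans ha.symm)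

lemma SupportedOnFCB.apply_eq_of_eq_off (hQ : SupportedOnFCB f Q) (hNS : IsNonSignaling Q)
    {i : Fin n} {x x' a a' : Fin n → ZMod 2} (hx : ∀ j ≠ i, x j = x' j)
    (ha : ∀ j ≠ i, a j = a' j) (hxa : ∑ j, a j = f x) (hxa' : ∑ j, a' j = f x') :
    Q x a = Q x' a' := by
  have hfilter : univ.filter (fun c : Fin n → ZMod 2 => ∀ j ∈ univ.erase i, c j = a j) =
      univ.filter (fun c : Fin n → ZMod 2 => ∀ j ∈ univ.erase i, c j = a' j) :=
    filter_congr fun c _ => forall₂_congr fun j hj => by rw [ha j (ne_of_mem_erase hj)]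
  have h := hNS (univ.erase i) x x' (fun j hj => hx j (ne_of_mem_erase hj)) a
  rwa [hQ.marginal_erase_eq i hxa, hfilter, hQ.marginal_erase_eq i hxa'] at h

lemma SupportedOnFCB.eq_FCB (hn : 1 ≤ n) (hQ : SupportedOnFCB f Q) (hnorm : ∀ x, ∑ a, Q x a = 1)
    (hconst : ∀ x a b, ∑ i, a i = f x → ∑ i, b i = f x → Q x a = Q x b) : Q = FCB n f := by
  funext x a
  by_cases ha : ∑ i, a i = f x
  · have h := hnorm x
    rw [← sum_subset (subset_univ (univ.filter fun b : Fin n → ZMod 2 => ∑ i, b i = f x))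
      fun b _ hb => hQ x b (by simpa using hb), sum_congr rfl fun b hb =>
        hconst x b a (by simpa using hb) ha, sum_const, card_filter_sum_eq_two_pow hn,
      nsmul_eq_mul] at h
    push_cast at h
    simpa [FCB, ha] using eq_inv_of_mul_eq_one_right h
  · simp [FCB, ha, hQ x a ha]

end Support

section PR

variable {n : ℕ} {Q : Box n}

lemma SupportedOnFCB.exists_eq_apply_one (hQ : SupportedOnFCB (fun x => ∏ i, x i) Q)
    (hNS : IsNonSignaling Q) {x a : Fin n → ZMod 2} (ha : ∑ i, a i = ∏ i, x i) :
    ∃ b, ∑ i, b i = 1 ∧ Q x a = Q 1 b := by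
  suffices h : ∀ s : Finset (Fin n), ∀ x a : Fin n → ZMod 2, (∀ j ∉ s, x j = 1) →
      ∑ i, a i = ∏ i, x i → ∃ b, ∑ i, b i = 1 ∧ Q x a = Q 1 b from
    h univ x a (by simp) ha
  intro s
  induction s using Finset.induction_on with
  | empty =>
    intro x a hx ha
    obtain rfl : x = 1 := funext fun j => hx j (notMem_empty j)
    exact ⟨a, by simpa using ha, rfl⟩
  | insert i s hi ih =>
    intro x a hx ha
    set x' := Function.update x i 1
    set a' := a + Pi.single i (∏ j, x' j - ∏ j, x j)
    have ha' : ∑ j, a' j = ∏ j, x' j := by rw [sum_add_single, ha, add_sub_cancel]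
    obtain ⟨b, hb, hQb⟩ := ih x' a' (fun j hj => by
      by_cases hji : j = i
      · simp [x', hji]
      · simp [x', hji, hx j (by simp [hji, hj])]) ha'
    refine ⟨b, hb, Eq.trans ?_ hQb⟩
    exact hQ.apply_eq_of_eq_off hNS (i := i) (fun j hj => by simp [x', hj])
      (fun j hj => by simp [a', hj]) ha ha'

lemma SupportedOnFCB.apply_one_eq_add_single_add_single
    (hQ : SupportedOnFCB (fun x => ∏ i, x i) Q) (hNS : IsNonSignaling Q) {j k : Fin n}
    {a : Fin n → ZMod 2} (ha : ∑ i, a i = 1) :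
    Q 1 a = Q 1 (a + Pi.single j 1 + Pi.single k 1) := by
  set xj : Fin n → ZMod 2 := Function.update 1 j 0
  set xk : Fin n → ZMod 2 := Function.update 1 k 0
  set xjk : Fin n → ZMod 2 := Function.update xj k 0
  have hprod_one : ∏ i, (1 : Fin n → ZMod 2) i = 1 := by simp
  have hprod_xj : ∏ i, xj i = 0 := prod_eq_zero (mem_univ j) (by simp [xj])
  have hprod_xk : ∏ i, xk i = 0 := prod_eq_zero (mem_univ k) (by simp [xk])
  have hprod_xjk : ∏ i, xjk i = 0 := prod_eq_zero (mem_univ k) (by simp [xjk])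
  set a₁ : Fin n → ZMod 2 := a + Pi.single j 1
  have hsum₁ : ∑ i, a₁ i = 0 := by rw [sum_add_single, ha]; rfl
  have hsum₂ : ∑ i, (a₁ + Pi.single k 1 : Fin n → ZMod 2) i = 1 := by
    rw [sum_add_single, hsum₁]; rfl
  calc Q 1 a = Q xj a₁ :=
        hQ.apply_eq_of_eq_off hNS (i := j) (fun l hl => by simp [xj, hl])
          (fun l hl => by simp [a₁, hl]) (ha.trans hprod_one.symm) (hsum₁.trans hprod_xj.symm)
    _ = Q xjk a₁ :=
        hQ.apply_eq_of_eq_off hNS (i := k) (fun l hl => by simp [xjk, hl]) (fun _ _ => rfl)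
          (hsum₁.trans hprod_xj.symm) (hsum₁.trans hprod_xjk.symm)
    _ = Q xk a₁ :=
        hQ.apply_eq_of_eq_off hNS (i := j)
          (fun l hl => by by_cases hlk : l = k <;> simp [xjk, xj, xk, hl, hlk]) (fun _ _ => rfl)
          (hsum₁.trans hprod_xjk.symm) (hsum₁.trans hprod_xk.symm)
    _ = Q 1 (a₁ + Pi.single k 1) :=
        hQ.apply_eq_of_eq_off hNS (i := k) (fun l hl => by simp [xk, hl])
          (fun l hl => by simp [hl]) (hsum₁.trans hprod_xk.symm) (hsum₂.trans hprod_one.symm)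

lemma SupportedOnFCB.apply_one_eq_apply_one (hQ : SupportedOnFCB (fun x => ∏ i, x i) Q)
    (hNS : IsNonSignaling Q) {a b : Fin n → ZMod 2} (ha : ∑ i, a i = 1) (hb : ∑ i, b i = 1) :
    Q 1 a = Q 1 b := by
  suffices h : ∀ s : Finset (Fin n), ∀ a : Fin n → ZMod 2, (∀ j ∉ s, a j = b j) →
      ∑ i, a i = 1 → Q 1 a = Q 1 b from h univ a (by simp) ha
  intro s
  induction s using Finset.induction_on with
  | empty =>
    intro a hab _
    rw [funext fun j => hab j (notMem_empty j)]
  | insert i s hi ih =>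
    intro a hab ha
    by_cases hai : a i = b i
    · refine ih a (fun j hj => ?_) ha
      by_cases hji : j = i
      · rwa [hji]
      · exact hab j (by simp [hji, hj])
    obtain ⟨k, hks, hak⟩ : ∃ k ∈ s, a k ≠ b k := by
      by_contra! hs
      refine hai <| congrFun (eq_of_sum_eq_of_eq_off (i := i) (fun j hji => ?_)
        (ha.trans hb.symm)) i
      by_cases hjs : j ∈ s
      · exact hs j hjs
      · exact hab j (by simp [hji, hjs])
    have hki : k ≠ i := by rintro rfl; exact hi hks
    have hflip : ∀ u v : ZMod 2, u ≠ v → u + 1 = v := by decide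
    rw [hQ.apply_one_eq_add_single_add_single hNS (j := i) (k := k) ha]
    refine ih _ (fun j hj => ?_) (by rw [sum_add_single, sum_add_single, ha]; rfl)
    by_cases hji : j = i
    · subst hji
      simp [hki, hflip _ _ hai]
    · have hjk : j ≠ k := by rintro rfl; exact hj hks
      simp [hji, hjk, hab j (by simp [hji, hj])]

lemma SupportedOnFCB.eq_nPR (hn : 1 ≤ n) (hQ : IsNSBox Q)
    (hsupp : SupportedOnFCB (fun x => ∏ i, x i) Q) : Q = nPR n := by
  refine hsupp.eq_FCB hn hQ.2.1 fun x a b ha hb => ?_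
  obtain ⟨a', ha', hQa⟩ := hsupp.exists_eq_apply_one hQ.2.2 ha
  obtain ⟨b', hb', hQb⟩ := hsupp.exists_eq_apply_one hQ.2.2 hb
  rw [hQa, hQb, hsupp.apply_one_eq_apply_one hQ.2.2 ha' hb']

end PR

/-- the n-partite Popescu–Rohrlich box is extremal in the
non-signaling polytope. -/
theorem nPR_extremal (n : ℕ) (hn : 1 ≤ n) : IsExtremalNS (nPR n) := by
  refine ⟨FCB_isNSBox hn _, fun ε P1 P2 hε₀ hε₁ h1 h2 hmix => ?_⟩
  have hsupp : ∀ x a, ∑ i, a i ≠ ∏ i, x i → P1 x a = 0 ∧ P2 x a = 0 := fun x a ha =>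
    eq_zero_and_eq_zero_of_convex_comb_eq_zero hε₀ hε₁ (h1.1 x a) (h2.1 x a)
      (by rw [← hmix, nPR, FCB, if_neg ha])
  exact ⟨SupportedOnFCB.eq_nPR hn h1 fun x a ha => (hsupp x a ha).1,
    SupportedOnFCB.eq_nPR hn h2 fun x a ha => (hsupp x a ha).2⟩
end
end

section
/- Any non-signaling n-partite box P satisfying P(⊕_{i=1}^n A_i = ∧_{i=1}^n X_i | X = x) = 1 for all inputs x ∈ {0,1}^n must have all single-party output marginals uniform: Prob[A_i = 0 | X = x] = 1/2 for all i and all x. Consequently, P equals the n-PR box. -/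
open Finset

noncomputable section

/-! The correlators `E_U(x) = ∑ₐ P(a|x) (-1)^(∑_{i ∈ U} aᵢ)` determine a box by Fourier inversion,
and non-signaling makes `E_U(x)` depend on `x|_U` only. Perfect PR correlation gives
`E_U = (-1)^(∏ xᵢ) E_{Uᶜ}`. For `j ∈ U` and `k ∉ U`, comparing this relation at the all-ones
input and at the inputs with a zero at `k`, at `j`, and at both forces `E_U = 0` for every proper
nonempty `U`. Only `E_∅ = 1` and `E_univ(x) = (-1)^(∏ xᵢ)` survive, which are the correlators of the
n-PR box, and `E_{{i}} = 0` says that the marginal of party `i` is uniform. -/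

namespace PRBox

def sgn : AddChar (ZMod 2) ℝ := AddChar.zmodChar 2 (by norm_num : (-1 : ℝ) ^ 2 = 1)

@[simp] lemma sgn_zero : sgn 0 = 1 := AddChar.map_zero_eq_one _

@[simp] lemma sgn_one : sgn 1 = -1 := by
  simp [sgn, AddChar.zmodChar_apply, ZMod.val_one]

lemma sgn_add (b c : ZMod 2) : sgn (b + c) = sgn b * sgn c := AddChar.map_add_eq_mul _ _ _

lemma sgn_sum {ι : Type*} (s : Finset ι) (b : ι → ZMod 2) :
    sgn (∑ i ∈ s, b i) = ∏ i ∈ s, sgn (b i) := by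
  induction s using Finset.cons_induction with
  | empty => simp
  | cons j s hj ih => rw [sum_cons, prod_cons, sgn_add, ih]

lemma one_add_sgn (b : ZMod 2) : 1 + sgn b = if b = 0 then 2 else 0 := by
  obtain rfl | rfl : b = 0 ∨ b = 1 := by revert b; decide
  · norm_num
  · norm_num

lemma eq_zero_of_eq_sgn_prod_mul {ι : Type*} [Fintype ι] [DecidableEq ι] {U : Finset ι}
    {j k : ι} (hj : j ∈ U) (hk : k ∉ U) {E F : (ι → ZMod 2) → ℝ}
    (hE : ∀ x y, (∀ i ∈ U, x i = y i) → E x = E y)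
    (hF : ∀ x y, (∀ i ∈ Uᶜ, x i = y i) → F x = F y)
    (hEF : ∀ x, E x = sgn (∏ i, x i) * F x) (x : ι → ZMod 2) : E x = 0 := by
  have hEF₀ : ∀ (y : ι → ZMod 2) (i : ι), y i = 0 → E y = F y := fun y i hi => by
    rw [hEF, prod_eq_zero (mem_univ i) hi, sgn_zero, one_mul]
  set zj := Function.update (1 : ι → ZMod 2) j 0
  set zk := Function.update (1 : ι → ZMod 2) k 0
  set zjk := Function.update zj k 0
  have hneg : E 1 = -F 1 := by simp [hEF]
  have hpos : E 1 = F 1 := calc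
    E 1 = E zk := hE _ _ fun i hi => by simp [zk, ne_of_mem_of_not_mem hi hk]
    _ = F zk := hEF₀ zk k (by simp [zk])
    _ = F zjk := hF _ _ fun i hi => by
        have hij : i ≠ j := (ne_of_mem_of_not_mem hj (mem_compl.1 hi)).symm
        simp [zk, zjk, zj, Function.update_apply, hij]
    _ = E zjk := (hEF₀ zjk k (by simp [zjk])).symm
    _ = E zj := hE _ _ fun i hi => by simp [zjk, ne_of_mem_of_not_mem hi hk]
    _ = F zj := hEF₀ zj j (by simp [zj])
    _ = F 1 := hF _ _ fun i hi => by simp [zj, (ne_of_mem_of_not_mem hj (mem_compl.1 hi)).symm]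
  have hF1 : F 1 = 0 := by linarith
  calc E x = E (U.piecewise x 1) := hE _ _ fun i hi => (U.piecewise_eq_of_mem _ _ hi).symm
    _ = sgn (∏ i, U.piecewise x 1 i) * F 1 := by
        rw [hEF, hF _ 1 fun i hi => U.piecewise_eq_of_notMem _ _ (mem_compl.1 hi)]
    _ = 0 := by rw [hF1, mul_zero]

lemma eq_zero_of_sum_filter_eq_sum {α : Type*} [Fintype α] {w : α → ℝ} (hw : ∀ a, 0 ≤ w a)
    {p : α → Prop} [DecidablePred p] (h : ∑ a with p a, w a = ∑ a, w a) {a : α} (ha : ¬p a) :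
    w a = 0 := by
  have hcompl : ∑ b with ¬p b, w b = 0 := by linarith [sum_filter_add_sum_filter_not univ p w]
  exact (sum_eq_zero_iff_of_nonneg fun b _ => hw b).1 hcompl a (by simpa using ha)

section Correlator

variable {n : ℕ}

lemma _root_.IsNonSignaling.sum_mul_piecewise_eq {P : Box n} (hP : IsNonSignaling P)
    (U : Finset (Fin n)) {x x' : Fin n → ZMod 2} (hxx' : ∀ i ∈ U, x i = x' i)
    (g : (Fin n → ZMod 2) → ℝ) :
    ∑ a, P x a * g (U.piecewise a 0) = ∑ a, P x' a * g (U.piecewise a 0) := by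
  -- The fibre of the restriction map over `b` is the event `a|_U = b|_U` of the non-signaling
  -- condition when `b` is itself a restriction, and empty otherwise.
  have hfiber : ∀ b : Fin n → ZMod 2, ∀ y, ∑ a with U.piecewise a 0 = b, P y a =
      if U.piecewise b 0 = b then ∑ a with ∀ i ∈ U, a i = b i, P y a else 0 := by
    intro b y
    split_ifs with hb
    · refine sum_congr (filter_congr fun a _ => ⟨?_, ?_⟩) fun _ _ => rfl
      · rintro rfl i hi
        exact (U.piecewise_eq_of_mem _ _ hi).symm
      · intro hab
        rw [← hb]
        exact U.piecewise_congr (fun i hi => hab i hi) fun _ _ => rfl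
    · refine sum_eq_zero fun a ha => absurd ?_ hb
      rw [(mem_filter.1 ha).2.symm]
      exact U.piecewise_congr (fun i hi => U.piecewise_eq_of_mem _ _ hi) fun _ _ => rfl
  have hsum : ∀ y, ∑ a, P y a * g (U.piecewise a 0) =
      ∑ b, (∑ a with U.piecewise a 0 = b, P y a) * g b := by
    intro y
    rw [← sum_fiberwise univ (U.piecewise · 0)]
    refine sum_congr rfl fun b _ => ?_
    rw [sum_mul]
    exact sum_congr rfl fun a ha => by rw [(mem_filter.1 ha).2]
  simp only [hsum, hfiber, hP U x x' hxx']

def correlator (P : Box n) (U : Finset (Fin n)) (x : Fin n → ZMod 2) : ℝ :=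
  ∑ a, P x a * sgn (∑ i ∈ U, a i)

lemma correlator_empty {P : Box n} (hP : ∀ x, ∑ a, P x a = 1) (x : Fin n → ZMod 2) :
    correlator P ∅ x = 1 := by
  simp [correlator, hP x]

lemma correlator_singleton (P : Box n) (i : Fin n) (x : Fin n → ZMod 2) :
    correlator P {i} x = 2 * ∑ a with a i = 0, P x a - ∑ a, P x a := by
  have hsgn : ∀ b : ZMod 2, sgn b = (if b = 0 then 2 else 0) - 1 := fun b => by
    rw [← one_add_sgn]; ring
  simp only [correlator, sum_singleton, hsgn, mul_sub, mul_one, mul_ite, mul_zero, sum_sub_distrib,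
    sum_ite, sum_const_zero, add_zero, mul_comm _ (2 : ℝ), ← mul_sum]

lemma _root_.IsNonSignaling.correlator_eq {P : Box n} (hP : IsNonSignaling P) (U : Finset (Fin n))
    {x x' : Fin n → ZMod 2} (hxx' : ∀ i ∈ U, x i = x' i) :
    correlator P U x = correlator P U x' := by
  have hr : ∀ a : Fin n → ZMod 2, ∑ i ∈ U, U.piecewise a 0 i = ∑ i ∈ U, a i :=
    fun a => sum_congr rfl fun i hi => U.piecewise_eq_of_mem _ _ hi
  simpa only [correlator, hr] using hP.sum_mul_piecewise_eq U hxx' fun b => sgn (∑ i ∈ U, b i)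

lemma sum_sgn_mul_correlator (P : Box n) (x a : Fin n → ZMod 2) :
    ∑ U, sgn (∑ i ∈ U, a i) * correlator P U x = 2 ^ n * P x a := by
  have horth : ∀ b : Fin n → ZMod 2,
      ∑ U : Finset (Fin n), ∏ i ∈ U, sgn (a i + b i) = if b = a then 2 ^ n else 0 := by
    intro b
    rw [← powerset_univ, ← prod_one_add]
    simp only [one_add_sgn, CharTwo.add_eq_zero]
    split_ifs with hb
    · simp [hb]
    · obtain ⟨i, hi⟩ := Function.ne_iff.1 hb
      exact prod_eq_zero (mem_univ i) (if_neg (Ne.symm hi))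
  calc ∑ U, sgn (∑ i ∈ U, a i) * correlator P U x
      = ∑ U : Finset (Fin n), ∑ b, P x b * ∏ i ∈ U, sgn (a i + b i) := by
        simp only [correlator, mul_sum, sgn_add, prod_mul_distrib, sgn_sum]
        exact sum_congr rfl fun _ _ => sum_congr rfl fun _ _ => by ring
    _ = 2 ^ n * P x a := by
        simp [sum_comm (γ := Finset (Fin n)), ← mul_sum, horth, mul_comm]

lemma correlator_eq_sgn_mul_correlator_compl {P : Box n} {f : (Fin n → ZMod 2) → ZMod 2}
    (hsupp : ∀ x a, ∑ i, a i ≠ f x → P x a = 0) (U : Finset (Fin n)) (x : Fin n → ZMod 2) :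
    correlator P U x = sgn (f x) * correlator P Uᶜ x := by
  rw [correlator, correlator, mul_sum]
  refine sum_congr rfl fun a _ => ?_
  by_cases ha : ∑ i, a i = f x
  · have hsplit : ∑ i ∈ U, a i = f x + ∑ i ∈ Uᶜ, a i := by
      rw [← ha, ← sum_add_sum_compl U, add_assoc, CharTwo.add_self_eq_zero, add_zero]
    rw [hsplit, sgn_add]
    ring
  · rw [hsupp x a ha]
    ring

lemma eq_nPR_of_correlator [NeZero n] {P : Box n} (hempty : ∀ x, correlator P ∅ x = 1)
    (huniv : ∀ x, correlator P univ x = sgn (∏ i, x i))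
    (hproper : ∀ U x, U.Nonempty → U ≠ univ → correlator P U x = 0) : P = nPR n := by
  funext x a
  have h := sum_sgn_mul_correlator P x a
  rw [sum_eq_add_of_mem ∅ univ (mem_univ _) (mem_univ _) univ_nonempty.ne_empty.symm
      fun U _ hU => by rw [hproper U x (nonempty_iff_ne_empty.2 hU.1) hU.2, mul_zero],
    sum_empty, sgn_zero, one_mul, hempty, huniv, ← sgn_add, ← CharTwo.sub_eq_add (∑ i, a i),
    one_add_sgn, ← pow_sub_one_mul (NeZero.ne n)] at h
  simp only [sub_eq_zero] at h
  simp only [nPR, FCB]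
  split_ifs at h ⊢
  · exact eq_inv_of_mul_eq_one_right (by linarith)
  · exact (mul_eq_zero.1 h.symm).resolve_left (by positivity)

lemma correlator_eq_zero {P : Box n} (hNS : IsNonSignaling P)
    (hsupp : ∀ x a, ∑ i, a i ≠ ∏ i, x i → P x a = 0) {U : Finset (Fin n)} (hU : U.Nonempty)
    (hU' : U ≠ univ) (x : Fin n → ZMod 2) : correlator P U x = 0 := by
  obtain ⟨j, hj⟩ := hU
  obtain ⟨k, -, hk⟩ := exists_of_ssubset (ssubset_univ_iff.2 hU')
  exact eq_zero_of_eq_sgn_prod_mul hj hk (fun _ _ => hNS.correlator_eq U)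
    (fun _ _ => hNS.correlator_eq Uᶜ) (correlator_eq_sgn_mul_correlator_compl hsupp U) x

end Correlator

end PRBox

open PRBox

/-- a non-signaling box perfectly satisfying the n-PR correlation has
uniform single-party marginals, and equals the n-PR box. -/
theorem perfect_PR_correlation_unique (n : ℕ) (hn : 2 ≤ n) (P : Box n)
    (hP : IsNSBox P)
    (hperf : ∀ x, ∑ a ∈ Finset.univ.filter
        (fun a : Fin n → ZMod 2 => (∑ i, a i) = ∏ i, x i), P x a = 1) :
    (∀ (i : Fin n) (x : Fin n → ZMod 2),
      ∑ a ∈ Finset.univ.filter (fun a : Fin n → ZMod 2 => a i = 0), P x a = 1/2) ∧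
    P = nPR n := by
  obtain ⟨hnonneg, hnorm, hNS⟩ := hP
  have hsupp : ∀ x a, ∑ i, a i ≠ ∏ i, x i → P x a = 0 := fun x _ ha =>
    eq_zero_of_sum_filter_eq_sum (hnonneg x) ((hperf x).trans (hnorm x).symm) ha
  have : Nontrivial (Fin n) := Fin.nontrivial_iff_two_le.2 hn
  have : NeZero n := ⟨by omega⟩
  refine ⟨fun i x => ?_, eq_nPR_of_correlator (correlator_empty hnorm) (fun x => ?_)
    fun U x hU hU' => correlator_eq_zero hNS hsupp hU hU' x⟩
  · have h := correlator_singleton P i x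
    rw [correlator_eq_zero hNS hsupp (singleton_nonempty i) (singleton_ne_univ i), hnorm x] at h
    linarith
  · rw [correlator_eq_sgn_mul_correlator_compl hsupp, compl_univ, correlator_empty hnorm, mul_one]
end
end

section
/- Given an (n−1)-PR box among parties 1,...,n−1 and n−1 bipartite PR boxes each shared between party i (i < n) and party n, the following wiring produces an n-PR box: each party i < n inputs x_i into the (n−1)-PR box obtaining a_i', then inputs a_i' into its PR box with party n; party n inputs x_n into all n−1 PR boxes; party i < n outputs a_i, its output from the PR box with party n, where a_i ⊕ b_i = x_n ∧ a_i' with b_i party n's corresponding output, and party n outputs ⊕_{i=1}^{n−1} b_i. The final outputs satisfy ⊕_{i=1}^n (output_i) = ∧_{i=1}^n x_i with probability 1, and the resulting box equals P^{PR}_n. -/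
open Finset

noncomputable section

lemma sum_fiber (m : ℕ) (v : ZMod 2) (r : ℝ) :
    ∑ a : Fin (m+1) → ZMod 2, (if (∑ i, a i) = v then r else 0) = 2^m * r := by
  rw [← (Fin.consEquiv (fun _ : Fin (m+1) => ZMod 2)).sum_comp
      (fun a : Fin (m+1) → ZMod 2 => if (∑ i, a i) = v then r else 0)]
  rw [Fintype.sum_prod_type]
  have h1 : ∀ (y : ZMod 2) (g : Fin m → ZMod 2),
      (∑ i, (Fin.consEquiv (fun _ : Fin (m+1) => ZMod 2)) (y, g) i) = y + ∑ i, g i := by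
    intro y g
    simp [Fin.consEquiv, Fin.sum_cons]
  simp_rw [h1]
  have h2 : ∀ s : ZMod 2, ∑ y : ZMod 2, (if y + s = v then r else 0) = r := by
    intro s
    have : ∀ y : ZMod 2, (y + s = v) = (y = v - s) := by
      intro y
      simp [eq_sub_iff_add_eq]
    simp_rw [this]
    rw [Finset.sum_ite_eq' Finset.univ (v - s) (fun _ => r)]
    simp
  rw [Finset.sum_comm]
  simp_rw [h2]
  simp [Finset.sum_const, Finset.card_univ, mul_comm]

/-- wiring an n-PR box among the first n parties into n bipartite PR
boxes shared with party n+1 (party i inputs its n-PR output `a'_i` into its PR box,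
party n+1 inputs `x_{n+1}` into all of them and outputs the XOR of its PR outputs)
yields exactly the (n+1)-PR box. -/
theorem nPR_recursive_construction (n : ℕ) (hn : 1 ≤ n)
    (x c : Fin (n + 1) → ZMod 2) :
    ∑ a' : Fin n → ZMod 2, ∑ b : Fin n → ZMod 2,
      (if (∑ i, a' i) = ∏ i : Fin n, x i.castSucc then ((2:ℝ)^(n-1))⁻¹ else 0) *
      (∏ i : Fin n,
        if c i.castSucc + b i = a' i * x (Fin.last n) then (1/2 : ℝ) else 0) *
      (if c (Fin.last n) = ∑ i, b i then 1 else 0)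
    = nPR (n + 1) x c := by
  obtain ⟨m, rfl⟩ : ∃ m, n = m + 1 := ⟨n - 1, (Nat.succ_pred_eq_of_pos hn).symm⟩
  set t := x (Fin.last (m+1)) with ht
  set X := ∏ i : Fin (m+1), x i.castSucc with hX
  set C := ∑ i : Fin (m+1), c i.castSucc with hC
  -- the product of bipartite PR indicators collapses to a single b
  have hb : ∀ a' b : Fin (m+1) → ZMod 2,
      (∏ i : Fin (m+1), if c i.castSucc + b i = a' i * t then (1/2 : ℝ) else 0)
        = if b = (fun i => a' i * t + c i.castSucc) then (1/2 : ℝ)^(m+1) else 0 := by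
    intro a' b
    by_cases h : b = fun i => a' i * t + c i.castSucc
    · subst h
      have key : ∀ p q : ZMod 2, p + (q + p) = q := by decide
      simp only [key, if_pos rfl, if_true]
      rw [Finset.prod_const]
      simp
    · rw [if_neg h]
      obtain ⟨i, hi⟩ := Function.ne_iff.mp h
      apply Finset.prod_eq_zero (Finset.mem_univ i)
      rw [if_neg]
      intro hcon
      apply hi
      have key : ∀ p q r : ZMod 2, p + q = r → q = r + p := by decide
      exact key _ _ _ hcon
  -- collapse the inner sum over b
  have hb2 : ∀ a' : Fin (m+1) → ZMod 2,
      ∑ b : Fin (m+1) → ZMod 2,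
        (if (∑ i, a' i) = X then ((2:ℝ)^(m+1-1))⁻¹ else 0) *
        (∏ i : Fin (m+1), if c i.castSucc + b i = a' i * t then (1/2 : ℝ) else 0) *
        (if c (Fin.last (m+1)) = ∑ i, b i then 1 else 0)
      = (if (∑ i, a' i) = X then ((2:ℝ)^m)⁻¹ else 0) * ((1/2 : ℝ)^(m+1) *
          (if c (Fin.last (m+1)) = (∑ i, a' i) * t + C then 1 else 0)) := by
    intro a'
    simp_rw [hb a', Nat.add_sub_cancel]
    have hterm : ∀ b : Fin (m+1) → ZMod 2,
        (if (∑ i, a' i) = X then ((2:ℝ)^m)⁻¹ else 0) *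
        (if b = (fun i => a' i * t + c i.castSucc) then (1/2 : ℝ)^(m+1) else 0) *
        (if c (Fin.last (m+1)) = ∑ i, b i then 1 else 0)
        = if b = (fun i => a' i * t + c i.castSucc) then
            (if (∑ i, a' i) = X then ((2:ℝ)^m)⁻¹ else 0) * (1/2 : ℝ)^(m+1) *
            (if c (Fin.last (m+1)) = ∑ i, b i then 1 else 0) else 0 := by
      intro b
      by_cases hb' : b = (fun i => a' i * t + c i.castSucc) <;> simp [hb']
    simp_rw [hterm]
    rw [Finset.sum_ite_eq' Finset.univ (fun i => a' i * t + c i.castSucc)]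
    have hsum : (∑ i, (a' i * t + c i.castSucc)) = (∑ i, a' i) * t + C := by
      rw [Finset.sum_add_distrib, ← Finset.sum_mul, hC]
    rw [if_pos (Finset.mem_univ _), hsum]
    by_cases h1 : (∑ i, a' i) = X <;> by_cases h2 : c (Fin.last (m+1)) = (∑ i, a' i) * t + C <;>
      simp [h1, h2]
  simp_rw [hb2]
  -- the summand over a' is a constant on the parity fiber
  have hkey : ∀ a' : Fin (m+1) → ZMod 2,
      (if (∑ i, a' i) = X then ((2:ℝ)^m)⁻¹ else 0) * ((1/2 : ℝ)^(m+1) *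
          (if c (Fin.last (m+1)) = (∑ i, a' i) * t + C then 1 else 0))
      = if (∑ i, a' i) = X then
          ((2:ℝ)^m)⁻¹ * ((1/2 : ℝ)^(m+1) *
            (if c (Fin.last (m+1)) = X * t + C then 1 else 0)) else 0 := by
    intro a'
    by_cases h1 : (∑ i, a' i) = X
    · rw [h1]; simp
    · simp [h1]
  simp_rw [hkey]
  rw [sum_fiber m X]
  -- evaluate the right-hand side
  have hsumc : (∑ i : Fin (m+2), c i) = C + c (Fin.last (m+1)) := by
    rw [Fin.sum_univ_castSucc, hC]
  have hprodx : (∏ i : Fin (m+2), x i) = X * t := by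
    rw [Fin.prod_univ_castSucc, hX, ht]
  have hiff : (c (Fin.last (m+1)) = X * t + C) ↔ ((∑ i : Fin (m+2), c i) = ∏ i : Fin (m+2), x i) := by
    rw [hsumc, hprodx]
    have key : ∀ p q r : ZMod 2, (p = q + r ↔ r + p = q) := by decide
    exact key _ _ _
  rw [nPR, FCB]
  by_cases h : (∑ i : Fin (m+2), c i) = ∏ i : Fin (m+2), x i
  · rw [if_pos h, if_pos (hiff.mpr h)]
    simp only [Nat.add_sub_cancel, mul_one]
    rw [one_div, inv_pow, ← mul_assoc,
      mul_inv_cancel₀ (by positivity : (2:ℝ)^m ≠ 0), one_mul]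
  · rw [if_neg h, if_neg (fun hc => h (hiff.mp hc))]
    ring
end
end
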